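/- arXiv:1002.2372 — 10 statements merged into one kernel-verified Lean document; each statement's English description precedes it below -/
import Mathlib

section
/- Let X be a Banach space and define the evolution operator U(t,s)x = e^{−(t−s)} x for t ≥ s ≥ 0 and x ∈ X. Then U is exponentially unstable in the Barreira–Valls sense; in particular e^{2t}‖U(t,t₀)x₀‖ ≥ e^{t−t₀}‖x₀‖ for all t ≥ t₀ ≥ 0 and x₀ ∈ X (even though U is uniformly exponentially stable). -/
theorem exponentially_unstable_stable_example_general
    {X : Type*} [NormedAddCommGroup X] [NormedSpace ℝ X]
    (U : ℝ → ℝ → X → X)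
    (hU : ∀ t s : ℝ, ∀ x : X, U t s x = Real.exp (-(t - s)) • x) :
    (∀ t t₀ : ℝ, 0 ≤ t₀ → t₀ ≤ t → ∀ x₀ : X,
        Real.exp (2 * t) * ‖U t t₀ x₀‖ ≥ Real.exp (t - t₀) * ‖x₀‖) ∧
    (∃ N : ℝ, 1 ≤ N ∧ ∃ α : ℝ, 0 ≤ α ∧ ∃ ν : ℝ, 0 < ν ∧
      ∀ t t₀ : ℝ, 0 ≤ t₀ → t₀ ≤ t → ∀ x₀ : X,
        N * Real.exp (α * t) * ‖U t t₀ x₀‖ ≥ Real.exp (ν * (t - t₀)) * ‖x₀‖) ∧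
    (∃ N : ℝ, 1 ≤ N ∧ ∃ ν : ℝ, 0 < ν ∧
      ∀ t t₀ : ℝ, 0 ≤ t₀ → t₀ ≤ t → ∀ x₀ : X,
        ‖U t t₀ x₀‖ ≤ N * Real.exp (-ν * (t - t₀)) * ‖x₀‖) := by
  have norm_U : ∀ t s x, ‖U t s x‖ = Real.exp (-(t - s)) * ‖x‖ := fun t s x => by
    rw [hU, norm_smul_of_nonneg (Real.exp_pos _).le]
  -- The weight e^{2t} turns the decay e^{-(t-t₀)} into the growth e^{t+t₀} ≥ e^{t-t₀}.
  have unstable : ∀ t t₀ : ℝ, 0 ≤ t₀ → t₀ ≤ t → ∀ x₀ : X,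
      Real.exp (2 * t) * ‖U t t₀ x₀‖ ≥ Real.exp (t - t₀) * ‖x₀‖ := by
    intro t t₀ ht₀ _ x₀
    rw [norm_U, ← mul_assoc, ← Real.exp_add]
    gcongr
    linarith
  refine ⟨unstable, ⟨1, le_rfl, 2, zero_le_two, 1, one_pos, ?_⟩, ⟨1, le_rfl, 1, one_pos, ?_⟩⟩
  · intro t t₀ ht₀ ht x₀
    simpa only [one_mul] using unstable t t₀ ht₀ ht x₀
  · intro t t₀ _ _ x₀
    rw [norm_U, one_mul, neg_one_mul]

/-- The evolution operator `U(t,s)x = e^(-(t-s)) • x` on a Banach space `X` is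
exponentially unstable in the Barreira–Valls sense; in particular
`e^(2t) * ‖U(t,t₀)x₀‖ ≥ e^(t-t₀) * ‖x₀‖` for all `t ≥ t₀ ≥ 0`, `x₀ ∈ X`
(even though `U` is uniformly exponentially stable). -/
theorem exponentially_unstable_stable_example
    {X : Type*} [NormedAddCommGroup X] [NormedSpace ℝ X] [CompleteSpace X]
    (U : ℝ → ℝ → X → X)
    (hU : ∀ t s : ℝ, ∀ x : X, U t s x = Real.exp (-(t - s)) • x) :
    (∀ t t₀ : ℝ, 0 ≤ t₀ → t₀ ≤ t → ∀ x₀ : X,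
        Real.exp (2 * t) * ‖U t t₀ x₀‖ ≥ Real.exp (t - t₀) * ‖x₀‖) ∧
    (∃ N : ℝ, 1 ≤ N ∧ ∃ α : ℝ, 0 ≤ α ∧ ∃ ν : ℝ, 0 < ν ∧
      ∀ t t₀ : ℝ, 0 ≤ t₀ → t₀ ≤ t → ∀ x₀ : X,
        N * Real.exp (α * t) * ‖U t t₀ x₀‖ ≥ Real.exp (ν * (t - t₀)) * ‖x₀‖) ∧
    (∃ N : ℝ, 1 ≤ N ∧ ∃ ν : ℝ, 0 < ν ∧
      ∀ t t₀ : ℝ, 0 ≤ t₀ → t₀ ≤ t → ∀ x₀ : X,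
        ‖U t t₀ x₀‖ ≤ N * Real.exp (-ν * (t - t₀)) * ‖x₀‖) :=
  exponentially_unstable_stable_example_general U hU
end

section
/- Let X = ℝ² with the Euclidean norm and let U be the evolution operator defined by U(t,t₀)(x₁,x₂) = (ξ₁,ξ₂), where ξ₁ = e^{t−t₀} cos t (x₁ cos t₀ + x₂ sin t₀) + e^{−(t−t₀)} sin t (x₁ sin t₀ − x₂ cos t₀) and ξ₂ = e^{t−t₀} sin t (x₁ cos t₀ + x₂ sin t₀) − e^{−(t−t₀)} cos t (x₁ sin t₀ − x₂ cos t₀). Then U is weakly exponentially unstable: for each x₀ ∈ ℝ², writing x₀ = (r₀ cos t₀, r₀ sin t₀) with r₀ ≥ 0 and t₀ ∈ [0,2π), one has ‖U(t,t₀)x₀‖ = r₀ e^{t−t₀} = e^{t−s}‖U(s,t₀)x₀‖ for all t ≥ s ≥ t₀. -/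
/-! For `x = (r cos θ, r sin θ)` the coefficient `x₁ sin θ - x₂ cos θ` of the decaying mode of
`U(·, θ) x` vanishes and that of the growing mode is `r`, so `U(t, θ) x = r e^(t-θ) (cos t, sin t)`.
Every vector has such a polar form with `θ ≥ 0`; starting its orbit at `t₀ = θ` gives
`‖U(t, θ) x‖ = e^(t-s) ‖U(s, θ) x‖`. -/

/-- The evolution operator on `ℝ²` (with the Euclidean norm) from the paper's example. -/
noncomputable def Uex (t t₀ : ℝ) (x : EuclideanSpace ℝ (Fin 2)) : EuclideanSpace ℝ (Fin 2) :=
  (WithLp.equiv 2 (Fin 2 → ℝ)).symm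
    ![Real.exp (t - t₀) * Real.cos t * (x 0 * Real.cos t₀ + x 1 * Real.sin t₀) +
        Real.exp (-(t - t₀)) * Real.sin t * (x 0 * Real.sin t₀ - x 1 * Real.cos t₀),
      Real.exp (t - t₀) * Real.sin t * (x 0 * Real.cos t₀ + x 1 * Real.sin t₀) -
        Real.exp (-(t - t₀)) * Real.cos t * (x 0 * Real.sin t₀ - x 1 * Real.cos t₀)]

open Real

noncomputable def polarVec (r θ : ℝ) : EuclideanSpace ℝ (Fin 2) :=
  (WithLp.equiv 2 (Fin 2 → ℝ)).symm ![r * cos θ, r * sin θ]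

@[simp]
lemma polarVec_apply_zero (r θ : ℝ) : polarVec r θ 0 = r * cos θ := rfl

@[simp]
lemma polarVec_apply_one (r θ : ℝ) : polarVec r θ 1 = r * sin θ := rfl

lemma norm_polarVec (r θ : ℝ) : ‖polarVec r θ‖ = |r| := by
  rw [EuclideanSpace.norm_eq, Fin.sum_univ_two, ← sqrt_sq_eq_abs]
  congr 1
  simp only [polarVec_apply_zero, polarVec_apply_one, norm_eq_abs, sq_abs]
  linear_combination r ^ 2 * cos_sq_add_sin_sq θ

lemma Uex_polarVec (r θ t : ℝ) : Uex t θ (polarVec r θ) = polarVec (r * exp (t - θ)) t := by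
  have growing : polarVec r θ 0 * cos θ + polarVec r θ 1 * sin θ = r := by
    rw [polarVec_apply_zero, polarVec_apply_one]
    linear_combination r * cos_sq_add_sin_sq θ
  have decaying : polarVec r θ 0 * sin θ - polarVec r θ 1 * cos θ = 0 := by
    rw [polarVec_apply_zero, polarVec_apply_one]
    ring
  rw [Uex, growing, decaying, polarVec]
  congr 3 <;> ring

lemma norm_Uex_polarVec {r : ℝ} (hr : 0 ≤ r) (θ t : ℝ) :
    ‖Uex t θ (polarVec r θ)‖ = r * exp (t - θ) := by
  rw [Uex_polarVec, norm_polarVec, abs_of_nonneg (by positivity)]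

lemma norm_Uex_polarVec_eq_exp_mul {r : ℝ} (hr : 0 ≤ r) (θ s t : ℝ) :
    ‖Uex t θ (polarVec r θ)‖ = exp (t - s) * ‖Uex s θ (polarVec r θ)‖ := by
  rw [norm_Uex_polarVec hr, norm_Uex_polarVec hr, mul_left_comm, ← exp_add, sub_add_sub_cancel]

lemma exists_polarVec_eq (x : EuclideanSpace ℝ (Fin 2)) :
    ∃ r θ, 0 ≤ r ∧ 0 ≤ θ ∧ x = polarVec r θ := by
  set z : ℂ := ⟨x 0, x 1⟩
  refine ⟨‖z‖, z.arg + 2 * π, norm_nonneg z, by linarith [z.neg_pi_lt_arg, pi_pos], ?_⟩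
  ext i
  fin_cases i
  · simp [cos_add_two_pi, Complex.norm_mul_cos_arg, z]
  · simp [sin_add_two_pi, Complex.norm_mul_sin_arg, z]

/-- `Uex` is weakly exponentially unstable: for each `x₀ ∈ ℝ²`, writing
`x₀ = (r₀ cos t₀, r₀ sin t₀)` with `r₀ ≥ 0` and `t₀ ∈ [0, 2π)`, one has
`‖U(t,t₀)x₀‖ = r₀ e^(t-t₀) = e^(t-s) ‖U(s,t₀)x₀‖` for all `t ≥ s ≥ t₀`. -/
theorem Uex_weakly_exponentially_unstable :
    (∃ N : ℝ, 1 ≤ N ∧ ∃ ν : ℝ, 0 < ν ∧ ∀ x₀ : EuclideanSpace ℝ (Fin 2), ∃ t₀ : ℝ, 0 ≤ t₀ ∧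
        ∀ s t : ℝ, t₀ ≤ s → s ≤ t →
          N * ‖Uex t t₀ x₀‖ ≥ Real.exp (ν * (t - s)) * ‖Uex s t₀ x₀‖) ∧
    (∀ (x₀ : EuclideanSpace ℝ (Fin 2)) (r₀ t₀ : ℝ), 0 ≤ r₀ → 0 ≤ t₀ → t₀ < 2 * Real.pi →
        x₀ = (WithLp.equiv 2 (Fin 2 → ℝ)).symm ![r₀ * Real.cos t₀, r₀ * Real.sin t₀] →
        ∀ s t : ℝ, t₀ ≤ s → s ≤ t →
          ‖Uex t t₀ x₀‖ = r₀ * Real.exp (t - t₀) ∧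
          ‖Uex t t₀ x₀‖ = Real.exp (t - s) * ‖Uex s t₀ x₀‖) := by
  refine ⟨⟨1, le_rfl, 1, one_pos, fun x₀ => ?_⟩, ?_⟩
  · obtain ⟨r, θ, hr, hθ, rfl⟩ := exists_polarVec_eq x₀
    refine ⟨θ, hθ, fun s t _ _ => ?_⟩
    rw [one_mul, one_mul, norm_Uex_polarVec_eq_exp_mul hr θ s t]
  · rintro x₀ r₀ t₀ hr₀ - - rfl s t - -
    exact ⟨norm_Uex_polarVec hr₀ t₀ t, norm_Uex_polarVec_eq_exp_mul hr₀ t₀ s t⟩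
end

section
/- Let X be a Banach space and U an evolution operator on X. Then U is weakly exponentially unstable if and only if there exists a nondecreasing function f : ℝ₊ → (0,∞) with lim_{t→∞} f(t) = +∞ such that for each x₀ ∈ X there exists t₀ ≥ 0 with ‖U(t,t₀)x₀‖ ≥ f(t−s)‖U(s,t₀)x₀‖ for all t ≥ s ≥ t₀. -/
/-- An evolution operator on a Banach space `X`. -/
structure EvolutionOperator (X : Type*) [NormedAddCommGroup X] [NormedSpace ℝ X] where
  U : ℝ → ℝ → X →L[ℝ] X
  isId : ∀ t : ℝ, 0 ≤ t → U t t = ContinuousLinearMap.id ℝ X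
  cocycle : ∀ t s t₀ : ℝ, 0 ≤ t₀ → t₀ ≤ s → s ≤ t → ∀ x : X, U t s (U s t₀ x) = U t t₀ x
  cont : ∀ x : X, ContinuousOn (fun p : ℝ × ℝ => U p.1 p.2 x)
    {p : ℝ × ℝ | 0 ≤ p.2 ∧ p.2 ≤ p.1}

/-- `U` is weakly exponentially unstable. -/
def WeakExpUnstable {X : Type*} [NormedAddCommGroup X] [NormedSpace ℝ X]
    (E : EvolutionOperator X) : Prop :=
  ∃ N : ℝ, 1 ≤ N ∧ ∃ ν : ℝ, 0 < ν ∧ ∀ x₀ : X, ∃ t₀ : ℝ, 0 ≤ t₀ ∧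
    ∀ s t : ℝ, t₀ ≤ s → s ≤ t →
      N * ‖E.U t t₀ x₀‖ ≥ Real.exp (ν * (t - s)) * ‖E.U s t₀ x₀‖

/-!
Only the function `u ↦ ‖U(u,t₀)x₀‖` on `[t₀, ∞)` matters. Given `f`, fix `δ > 0` with
`c := f δ > 1`. Iterating the growth estimate over steps of length `δ` gives
`‖U(s + nδ, t₀)x₀‖ ≥ cⁿ ‖U(s,t₀)x₀‖`, and the remaining step of length `r ∈ [0, δ)` costs at
most the factor `f 0 > 0` by monotonicity. Since `e^{ν(t-s)} ≤ c^{n+1}` for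
`ν = log c / δ` and `n = ⌊(t-s)/δ⌋`, this is weak exponential instability with `N = c / f 0`.
Conversely, `f t = e^{νt} / N` is a growth function.
-/

open Set Filter

theorem pow_mul_le_of_mul_le_shift {φ : ℝ → ℝ} {c δ t₀ : ℝ} (hc : 0 ≤ c) (hδ : 0 ≤ δ)
    (hstep : ∀ u, t₀ ≤ u → c * φ u ≤ φ (u + δ)) (n : ℕ) {u : ℝ} (hu : t₀ ≤ u) :
    c ^ n * φ u ≤ φ (u + n * δ) := by
  induction n with
  | zero => simp
  | succ n ih =>
    calc c ^ (n + 1) * φ u = c * (c ^ n * φ u) := by ring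
      _ ≤ c * φ (u + n * δ) := mul_le_mul_of_nonneg_left ih hc
      _ ≤ φ (u + n * δ + δ) := hstep _ (by nlinarith)
      _ = φ (u + ↑(n + 1) * δ) := by push_cast; ring_nf

theorem Real.rpow_le_pow_natFloor_add_one {c : ℝ} (hc : 1 ≤ c) (y : ℝ) :
    c ^ y ≤ c ^ (⌊y⌋₊ + 1) := by
  rw [← Real.rpow_natCast]
  exact Real.rpow_le_rpow_of_exponent_le hc (by exact_mod_cast (Nat.lt_floor_add_one y).le)

theorem mul_pow_floor_mul_le_of_growth {f φ : ℝ → ℝ} {δ t₀ : ℝ} (hf : MonotoneOn f (Ici 0))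
    (hφ : ∀ u, 0 ≤ φ u) (hδ : 0 < δ) (hf0 : 0 < f 0) (hfδ : 0 ≤ f δ)
    (hgrowth : ∀ s t, t₀ ≤ s → s ≤ t → f (t - s) * φ s ≤ φ t)
    {s t : ℝ} (hs : t₀ ≤ s) (hst : s ≤ t) :
    f 0 * (f δ ^ ⌊(t - s) / δ⌋₊ * φ s) ≤ φ t := by
  set n := ⌊(t - s) / δ⌋₊
  have hnδ : n * δ ≤ t - s := (le_div_iff₀ hδ).1 (Nat.floor_le (div_nonneg (by linarith) hδ.le))
  have hiter : f δ ^ n * φ s ≤ φ (s + n * δ) :=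
    pow_mul_le_of_mul_le_shift hfδ hδ.le
      (fun u hu ↦ by simpa using hgrowth u (u + δ) hu (by linarith)) n hs
  have hrest : f 0 ≤ f (t - (s + n * δ)) :=
    hf self_mem_Ici (by simp only [mem_Ici]; linarith) (by linarith)
  calc f 0 * (f δ ^ n * φ s) ≤ f 0 * φ (s + n * δ) := mul_le_mul_of_nonneg_left hiter hf0.le
    _ ≤ f (t - (s + n * δ)) * φ (s + n * δ) := mul_le_mul_of_nonneg_right hrest (hφ _)
    _ ≤ φ t := hgrowth _ _ (by nlinarith [Nat.cast_nonneg (α := ℝ) n]) (by linarith)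

theorem exists_exp_mul_le_of_growth {f : ℝ → ℝ} (hf : MonotoneOn f (Ici 0)) (hf0 : 0 < f 0)
    (hftop : Tendsto f atTop atTop) :
    ∃ N, 1 ≤ N ∧ ∃ ν, 0 < ν ∧ ∀ (φ : ℝ → ℝ) (t₀ : ℝ), (∀ u, 0 ≤ φ u) →
      (∀ s t, t₀ ≤ s → s ≤ t → f (t - s) * φ s ≤ φ t) →
      ∀ s t, t₀ ≤ s → s ≤ t → Real.exp (ν * (t - s)) * φ s ≤ N * φ t := by
  obtain ⟨δ, hfδ, hδ⟩ := ((hftop.eventually_gt_atTop 1).and (eventually_gt_atTop 0)).exists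
  set c := f δ
  have hlogc : 0 < Real.log c := Real.log_pos hfδ
  refine ⟨max 1 (c / f 0), le_max_left _ _, Real.log c / δ, div_pos hlogc hδ,
    fun φ t₀ hφ hgrowth s t hs hst ↦ ?_⟩
  set n := ⌊(t - s) / δ⌋₊
  have hexp : Real.exp (Real.log c / δ * (t - s)) ≤ c * c ^ n := by
    calc Real.exp (Real.log c / δ * (t - s)) = c ^ ((t - s) / δ) := by
          rw [Real.rpow_def_of_pos (by linarith)]; ring_nf
      _ ≤ c ^ (n + 1) := Real.rpow_le_pow_natFloor_add_one hfδ.le _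
      _ = c * c ^ n := pow_succ' c n
  have hbound := mul_pow_floor_mul_le_of_growth hf hφ hδ hf0 (by linarith) hgrowth hs hst
  calc Real.exp (Real.log c / δ * (t - s)) * φ s ≤ c * c ^ n * φ s :=
        mul_le_mul_of_nonneg_right hexp (hφ s)
    _ = c / f 0 * (f 0 * (c ^ n * φ s)) := by field_simp
    _ ≤ c / f 0 * φ t := mul_le_mul_of_nonneg_left hbound (by positivity)
    _ ≤ max 1 (c / f 0) * φ t := mul_le_mul_of_nonneg_right (le_max_right _ _) (hφ t)

theorem weakExpUnstable_iff_function_general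
    {X : Type*} [NormedAddCommGroup X] [NormedSpace ℝ X]
    (E : EvolutionOperator X) :
    WeakExpUnstable E ↔
      ∃ f : ℝ → ℝ, MonotoneOn f (Set.Ici 0) ∧ (∀ t ∈ Set.Ici (0 : ℝ), 0 < f t) ∧
        Filter.Tendsto f Filter.atTop Filter.atTop ∧
        ∀ x₀ : X, ∃ t₀ : ℝ, 0 ≤ t₀ ∧ ∀ s t : ℝ, t₀ ≤ s → s ≤ t →
          ‖E.U t t₀ x₀‖ ≥ f (t - s) * ‖E.U s t₀ x₀‖ := by
  constructor
  · rintro ⟨N, hN, ν, hν, h⟩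
    have hN0 : 0 < N := one_pos.trans_le hN
    refine ⟨fun t ↦ Real.exp (ν * t) / N,
      fun a _ b _ hab ↦ by dsimp only; gcongr, fun t _ ↦ by positivity,
      (Real.tendsto_exp_atTop.comp (tendsto_id.const_mul_atTop hν)).atTop_div_const hN0,
      fun x₀ ↦ ?_⟩
    obtain ⟨t₀, ht₀, hx⟩ := h x₀
    refine ⟨t₀, ht₀, fun s t hs hst ↦ ?_⟩
    rw [ge_iff_le, div_mul_eq_mul_div, div_le_iff₀ hN0, mul_comm _ N]
    exact hx s t hs hst
  · rintro ⟨f, hf, hpos, hftop, h⟩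
    obtain ⟨N, hN, ν, hν, hexp⟩ := exists_exp_mul_le_of_growth hf (hpos 0 self_mem_Ici) hftop
    refine ⟨N, hN, ν, hν, fun x₀ ↦ ?_⟩
    obtain ⟨t₀, ht₀, hx⟩ := h x₀
    exact ⟨t₀, ht₀, hexp (fun u ↦ ‖E.U u t₀ x₀‖) t₀ (fun _ ↦ norm_nonneg _) hx⟩

/-- `U` is weakly exponentially unstable iff there is a nondecreasing
`f : ℝ₊ → (0,∞)` with `f(t) → ∞` such that for each `x₀` there is `t₀ ≥ 0` with
`‖U(t,t₀)x₀‖ ≥ f(t-s) ‖U(s,t₀)x₀‖` for all `t ≥ s ≥ t₀`. -/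
theorem weakExpUnstable_iff_function
    {X : Type*} [NormedAddCommGroup X] [NormedSpace ℝ X] [CompleteSpace X]
    (E : EvolutionOperator X) :
    WeakExpUnstable E ↔
      ∃ f : ℝ → ℝ, MonotoneOn f (Set.Ici 0) ∧ (∀ t ∈ Set.Ici (0 : ℝ), 0 < f t) ∧
        Filter.Tendsto f Filter.atTop Filter.atTop ∧
        ∀ x₀ : X, ∃ t₀ : ℝ, 0 ≤ t₀ ∧ ∀ s t : ℝ, t₀ ≤ s → s ≤ t →
          ‖E.U t t₀ x₀‖ ≥ f (t - s) * ‖E.U s t₀ x₀‖ :=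
  weakExpUnstable_iff_function_general E
end

section
/- (Datko-type theorem for weak exponential instability) Let X be a Banach space and let U be an evolution operator on X with exponential decay. Then U is weakly exponentially unstable if and only if there exist p ≥ 1 and K > 0 such that for each x₀ ∈ X there exists t₀ ≥ 0 with ∫_{t₀}^{t} ‖U(τ,t₀)x₀‖^p dτ ≤ K‖U(t,t₀)x₀‖^p for all t ≥ t₀. -/
/-- `U` has exponential decay. -/
def ExpDecay {X : Type*} [NormedAddCommGroup X] [NormedSpace ℝ X]
    (E : EvolutionOperator X) : Prop :=
  ∃ M : ℝ, 1 ≤ M ∧ ∃ ω : ℝ, 0 < ω ∧ ∀ t t₀ : ℝ, 0 ≤ t₀ → t₀ ≤ t → ∀ x₀ : X,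
    M * ‖E.U t t₀ x₀‖ ≥ Real.exp (-ω * (t - t₀)) * ‖x₀‖

/-!
If `‖U(s,t₀)x₀‖e^{ν(t-s)} ≤ N‖U(t,t₀)x₀‖`, integrating in `s` gives the Datko bound with `p = 1`.

Conversely write `f τ = ‖U(τ,t₀)x₀‖`. Exponential decay bounds `f u` by a multiple of `f` on
`[u, u+1]`; integrating that over `[u, u+1]` and using the Datko bound gives a uniform comparison
`f u ≤ L f v` for all `u ≤ v`. Integrating the comparison over `[u, u+δ]` with `δ = K L^p e^p`
shows `e f u ≤ f (u+δ)`, and iterating this step gives growth at rate `1/δ`.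
-/

open Real MeasureTheory Set intervalIntegral

section RealFunctions

variable {f : ℝ → ℝ} {a p K : ℝ}

lemma integral_exp_mul_sub_le {ν t : ℝ} (hν : 0 < ν) :
    ∫ τ in a..t, exp (ν * (τ - t)) ≤ ν⁻¹ := by
  simp only [mul_sub]
  rw [integral_comp_mul_sub (fun x => exp x) hν.ne', integral_exp, sub_self, exp_zero,
    smul_eq_mul]
  exact mul_le_of_le_one_right (inv_pos.2 hν).le (sub_le_self _ (exp_pos _).le)

lemma integral_le_of_exp_growth {t N ν : ℝ} (hν : 0 < ν) (hat : a ≤ t)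
    (hf : ContinuousOn f (Icc a t)) (hft : 0 ≤ f t)
    (hgrowth : ∀ s ∈ Icc a t, exp (ν * (t - s)) * f s ≤ N * f t) :
    ∫ s in a..t, f s ≤ N / ν * f t := by
  have hNft : 0 ≤ N * f t := hft.trans (by simpa using hgrowth t ⟨hat, le_rfl⟩)
  have hpointwise : ∀ s ∈ Icc a t, f s ≤ N * f t * exp (ν * (s - t)) := fun s hs =>
    calc f s = exp (ν * (s - t)) * (exp (ν * (t - s)) * f s) := by
          rw [← mul_assoc, ← exp_add, show ν * (s - t) + ν * (t - s) = 0 by ring, exp_zero,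
            one_mul]
      _ ≤ exp (ν * (s - t)) * (N * f t) :=
          mul_le_mul_of_nonneg_left (hgrowth s hs) (exp_pos _).le
      _ = N * f t * exp (ν * (s - t)) := mul_comm _ _
  calc ∫ s in a..t, f s
      ≤ ∫ s in a..t, N * f t * exp (ν * (s - t)) :=
        integral_mono_on hat (hf.intervalIntegrable_of_Icc hat)
          ((by fun_prop : Continuous fun s => N * f t * exp (ν * (s - t))).intervalIntegrable a t)
          hpointwise
    _ ≤ N * f t * ν⁻¹ := by
        rw [intervalIntegral.integral_const_mul]
        exact mul_le_mul_of_nonneg_left (integral_exp_mul_sub_le hν) hNft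
    _ = N / ν * f t := by ring

lemma ContinuousOn.intervalIntegrable_rpow_of_Ici (hf : ContinuousOn f (Ici a)) (hp : 0 ≤ p)
    {u v : ℝ} (hu : a ≤ u) (hv : a ≤ v) :
    IntervalIntegrable (fun τ => f τ ^ p) volume u v :=
  ((hf.rpow_const fun _ _ => Or.inr hp).mono
    fun _ hx => (le_min hu hv).trans hx.1).intervalIntegrable


lemma sub_mul_rpow_le_of_datko (hf0 : ∀ τ, 0 ≤ f τ) (hf : ContinuousOn f (Ici a)) (hp : 0 < p)
    (hdatko : ∀ t, a ≤ t → ∫ τ in a..t, f τ ^ p ≤ K * f t ^ p)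
    {A u v w : ℝ} (hA : 0 < A) (hu : a ≤ u) (huv : u ≤ v) (hvw : v ≤ w)
    (hbound : ∀ τ ∈ Icc u v, f u ≤ A * f τ) :
    (v - u) * f u ^ p ≤ K * A ^ p * f w ^ p := by
  have hlower : ∀ τ ∈ Icc u v, (f u / A) ^ p ≤ f τ ^ p := fun τ hτ =>
    rpow_le_rpow (div_nonneg (hf0 u) hA.le) ((div_le_iff₀' hA).2 (hbound τ hτ)) hp.le
  have hint : (v - u) * (f u / A) ^ p ≤ ∫ τ in a..w, f τ ^ p :=
    calc (v - u) * (f u / A) ^ p = ∫ τ in u..v, (f u / A) ^ p := by simp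
      _ ≤ ∫ τ in u..v, f τ ^ p :=
          integral_mono_on huv intervalIntegrable_const
            (hf.intervalIntegrable_rpow_of_Ici hp.le hu (hu.trans huv)) hlower
      _ ≤ ∫ τ in a..w, f τ ^ p :=
          integral_mono_interval hu huv hvw (ae_of_all _ fun τ => rpow_nonneg (hf0 τ) p)
            (hf.intervalIntegrable_rpow_of_Ici hp.le le_rfl (hu.trans (huv.trans hvw)))
  rw [div_rpow (hf0 u) hA.le, mul_div_assoc', div_le_iff₀ (rpow_pos_of_pos hA p)] at hint
  calc (v - u) * f u ^ p ≤ (∫ τ in a..w, f τ ^ p) * A ^ p := hint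
    _ ≤ K * f w ^ p * A ^ p :=
        mul_le_mul_of_nonneg_right (hdatko w (hu.trans (huv.trans hvw))) (rpow_nonneg hA.le p)
    _ = K * A ^ p * f w ^ p := by ring

lemma le_mul_of_datko (hf0 : ∀ τ, 0 ≤ f τ) (hf : ContinuousOn f (Ici a)) (hp : 0 < p)
    (hK : 0 ≤ K) (hdatko : ∀ t, a ≤ t → ∫ τ in a..t, f τ ^ p ≤ K * f t ^ p)
    {A : ℝ} (hA : 0 < A) (hlocal : ∀ u τ, a ≤ u → u ≤ τ → τ ≤ u + 1 → f u ≤ A * f τ)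
    {u v : ℝ} (hu : a ≤ u) (huv : u ≤ v) :
    f u ≤ A * max 1 (K ^ p⁻¹) * f v := by
  rcases le_total v (u + 1) with hnear | hfar
  · calc f u ≤ A * f v := hlocal u v hu huv hnear
      _ ≤ A * max 1 (K ^ p⁻¹) * f v :=
          mul_le_mul_of_nonneg_right (le_mul_of_one_le_right hA.le (le_max_left _ _)) (hf0 v)
  · have key := sub_mul_rpow_le_of_datko hf0 hf hp hdatko hA hu (le_add_of_nonneg_right zero_le_one)
      hfar fun τ hτ => hlocal u τ hu hτ.1 hτ.2
    have hroot : f u ≤ K ^ p⁻¹ * A * f v := by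
      rw [← rpow_le_rpow_iff (hf0 u) (mul_nonneg (mul_nonneg (rpow_nonneg hK _) hA.le) (hf0 v)) hp,
        mul_rpow (mul_nonneg (rpow_nonneg hK _) hA.le) (hf0 v), mul_rpow (rpow_nonneg hK _) hA.le,
        rpow_inv_rpow hK hp.ne']
      simpa using key
    calc f u ≤ K ^ p⁻¹ * A * f v := hroot
      _ ≤ A * max 1 (K ^ p⁻¹) * f v := by
          rw [mul_comm (K ^ p⁻¹)]
          gcongr
          · exact hf0 v
          · exact le_max_right _ _

lemma exp_one_mul_le_of_datko (hf0 : ∀ τ, 0 ≤ f τ) (hf : ContinuousOn f (Ici a)) (hp : 0 < p)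
    (hK : 0 < K) (hdatko : ∀ t, a ≤ t → ∫ τ in a..t, f τ ^ p ≤ K * f t ^ p)
    {L : ℝ} (hL : 0 < L) (hcomp : ∀ u v, a ≤ u → u ≤ v → f u ≤ L * f v) {u : ℝ} (hu : a ≤ u) :
    exp 1 * f u ≤ f (u + K * L ^ p * exp p) := by
  have hKL : 0 < K * L ^ p := mul_pos hK (rpow_pos_of_pos hL p)
  have key := sub_mul_rpow_le_of_datko hf0 hf hp hdatko hL hu
    (le_add_of_nonneg_right (mul_pos hKL (exp_pos p)).le) le_rfl fun τ hτ => hcomp u τ hu hτ.1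
  rw [add_sub_cancel_left] at key
  have hpow : K * L ^ p * (exp 1 * f u) ^ p ≤ K * L ^ p * f (u + K * L ^ p * exp p) ^ p := by
    rwa [mul_rpow (exp_pos 1).le (hf0 u), exp_one_rpow, ← mul_assoc]
  exact (rpow_le_rpow_iff (mul_nonneg (exp_pos 1).le (hf0 u)) (hf0 _) hp).1
    (le_of_mul_le_mul_left hpow hKL)

lemma exp_nat_mul_le_of_step {δ : ℝ} (hδ : 0 ≤ δ)
    (hstep : ∀ u, a ≤ u → exp 1 * f u ≤ f (u + δ)) (n : ℕ) {u : ℝ} (hu : a ≤ u) :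
    exp n * f u ≤ f (u + n * δ) := by
  induction n with
  | zero => simp
  | succ n ih =>
    calc exp (n + 1 : ℕ) * f u = exp 1 * (exp n * f u) := by push_cast; rw [exp_add]; ring
      _ ≤ exp 1 * f (u + n * δ) := by gcongr
      _ ≤ f (u + n * δ + δ) := hstep _ (le_add_of_le_of_nonneg hu (by positivity))
      _ = f (u + (n + 1 : ℕ) * δ) := by push_cast; ring_nf

lemma exp_mul_le_of_step (hf0 : ∀ τ, 0 ≤ f τ) {δ L : ℝ} (hδ : 0 < δ)
    (hcomp : ∀ u v, a ≤ u → u ≤ v → f u ≤ L * f v)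
    (hstep : ∀ u, a ≤ u → exp 1 * f u ≤ f (u + δ)) {s t : ℝ} (hs : a ≤ s) (hst : s ≤ t) :
    exp (δ⁻¹ * (t - s)) * f s ≤ L * exp 1 * f t := by
  set n := ⌊δ⁻¹ * (t - s)⌋₊
  have hx : 0 ≤ δ⁻¹ * (t - s) := mul_nonneg (inv_nonneg.2 hδ.le) (sub_nonneg.2 hst)
  have hn : n * δ ≤ t - s := by
    rw [mul_comm, ← le_inv_mul_iff₀ hδ]
    exact Nat.floor_le hx
  calc exp (δ⁻¹ * (t - s)) * f s ≤ exp 1 * (exp n * f s) := by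
        rw [← mul_assoc, ← exp_add, add_comm]
        gcongr
        · exact hf0 s
        · exact (Nat.lt_floor_add_one _).le
    _ ≤ exp 1 * f (s + n * δ) := by gcongr; exact exp_nat_mul_le_of_step hδ.le hstep n hs
    _ ≤ exp 1 * (L * f t) := by
        gcongr
        exact hcomp _ _ (le_add_of_le_of_nonneg hs (by positivity)) (by linarith)
    _ = L * exp 1 * f t := by ring

end RealFunctions

namespace EvolutionOperator

variable {X : Type*} [NormedAddCommGroup X] [NormedSpace ℝ X] (E : EvolutionOperator X)

lemma continuousOn_norm_apply (x : X) {t₀ : ℝ} (ht₀ : 0 ≤ t₀) :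
    ContinuousOn (fun τ => ‖E.U τ t₀ x‖) (Ici t₀) :=
  ((E.cont x).comp (Continuous.prodMk_left t₀).continuousOn fun _ hτ => ⟨ht₀, hτ⟩).norm

end EvolutionOperator

section Stability

variable {X : Type*} [NormedAddCommGroup X] [NormedSpace ℝ X] {E : EvolutionOperator X}

lemma ExpDecay.exists_local_bound (h : ExpDecay E) :
    ∃ A, 1 ≤ A ∧ ∀ x t₀ s t, 0 ≤ t₀ → t₀ ≤ s → s ≤ t → t ≤ s + 1 →
      ‖E.U s t₀ x‖ ≤ A * ‖E.U t t₀ x‖ := by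
  obtain ⟨M, hM, ω, hω, hdecay⟩ := h
  refine ⟨M * exp ω, one_le_mul_of_one_le_of_one_le hM (one_le_exp hω.le),
    fun x t₀ s t ht₀ hs hst ht => ?_⟩
  have key := hdecay t s (ht₀.trans hs) hst (E.U s t₀ x)
  rw [E.cocycle t s t₀ ht₀ hs hst, ge_iff_le, neg_mul, exp_neg, inv_mul_le_iff₀ (exp_pos _)] at key
  calc ‖E.U s t₀ x‖ ≤ exp (ω * (t - s)) * (M * ‖E.U t t₀ x‖) := key
    _ ≤ exp ω * (M * ‖E.U t t₀ x‖) := by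
        gcongr
        exact mul_le_of_le_one_right hω.le (by linarith)
    _ = M * exp ω * ‖E.U t t₀ x‖ := by ring

lemma WeakExpUnstable.integral_norm_le (h : WeakExpUnstable E) :
    ∃ K, 0 < K ∧ ∀ x₀ : X, ∃ t₀, 0 ≤ t₀ ∧ ∀ t, t₀ ≤ t →
      ∫ τ in t₀..t, ‖E.U τ t₀ x₀‖ ≤ K * ‖E.U t t₀ x₀‖ := by
  obtain ⟨N, hN, ν, hν, hgrowth⟩ := h
  refine ⟨N / ν, by positivity, fun x₀ => ?_⟩
  obtain ⟨t₀, ht₀, hx₀⟩ := hgrowth x₀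
  exact ⟨t₀, ht₀, fun t ht => integral_le_of_exp_growth hν ht
    ((E.continuousOn_norm_apply x₀ ht₀).mono Icc_subset_Ici_self) (norm_nonneg _)
    fun s hs => hx₀ s t hs.1 hs.2⟩

lemma WeakExpUnstable.of_integral_norm_rpow_le (hdecay : ExpDecay E) {p K : ℝ} (hp : 0 < p)
    (hK : 0 < K) (hdatko : ∀ x₀ : X, ∃ t₀, 0 ≤ t₀ ∧ ∀ t, t₀ ≤ t →
      ∫ τ in t₀..t, ‖E.U τ t₀ x₀‖ ^ p ≤ K * ‖E.U t t₀ x₀‖ ^ p) :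
    WeakExpUnstable E := by
  obtain ⟨A, hA, hlocal⟩ := hdecay.exists_local_bound
  set L := A * max 1 (K ^ p⁻¹)
  have hL : 1 ≤ L := one_le_mul_of_one_le_of_one_le hA (le_max_left _ _)
  refine ⟨L * exp 1, one_le_mul_of_one_le_of_one_le hL (one_le_exp zero_le_one),
    (K * L ^ p * exp p)⁻¹, by positivity, fun x₀ => ?_⟩
  obtain ⟨t₀, ht₀, hx₀⟩ := hdatko x₀
  have hf0 : ∀ τ, 0 ≤ ‖E.U τ t₀ x₀‖ := fun τ => norm_nonneg _
  have hf := E.continuousOn_norm_apply x₀ ht₀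
  have hcomp : ∀ u v, t₀ ≤ u → u ≤ v → ‖E.U u t₀ x₀‖ ≤ L * ‖E.U v t₀ x₀‖ :=
    fun u v hu huv => le_mul_of_datko hf0 hf hp hK.le hx₀ (by positivity)
      (fun u τ hu huτ hτ => hlocal x₀ t₀ u τ ht₀ hu huτ hτ) hu huv
  exact ⟨t₀, ht₀, fun s t hs hst => exp_mul_le_of_step hf0 (by positivity) hcomp
    (fun u hu => exp_one_mul_le_of_datko hf0 hf hp hK hx₀ (by positivity) hcomp hu) hs hst⟩

end Stability

theorem weakExpUnstable_iff_datko_general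
    {X : Type*} [NormedAddCommGroup X] [NormedSpace ℝ X]
    (E : EvolutionOperator X) (hdecay : ExpDecay E) :
    WeakExpUnstable E ↔
      ∃ p : ℝ, 1 ≤ p ∧ ∃ K : ℝ, 0 < K ∧ ∀ x₀ : X, ∃ t₀ : ℝ, 0 ≤ t₀ ∧
        ∀ t : ℝ, t₀ ≤ t →
          (∫ τ in t₀..t, ‖E.U τ t₀ x₀‖ ^ p) ≤ K * ‖E.U t t₀ x₀‖ ^ p := by
  refine ⟨fun h => ?_, fun ⟨p, hp, K, hK, hdatko⟩ =>
    WeakExpUnstable.of_integral_norm_rpow_le hdecay (zero_lt_one.trans_le hp) hK hdatko⟩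
  obtain ⟨K, hK, hdatko⟩ := h.integral_norm_le
  exact ⟨1, le_rfl, K, hK, by simpa only [rpow_one] using hdatko⟩

/-- Datko-type theorem for weak exponential instability. -/
theorem weakExpUnstable_iff_datko
    {X : Type*} [NormedAddCommGroup X] [NormedSpace ℝ X] [CompleteSpace X]
    (E : EvolutionOperator X) (hdecay : ExpDecay E) :
    WeakExpUnstable E ↔
      ∃ p : ℝ, 1 ≤ p ∧ ∃ K : ℝ, 0 < K ∧ ∀ x₀ : X, ∃ t₀ : ℝ, 0 ≤ t₀ ∧
        ∀ t : ℝ, t₀ ≤ t →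
          (∫ τ in t₀..t, ‖E.U τ t₀ x₀‖ ^ p) ≤ K * ‖E.U t t₀ x₀‖ ^ p :=
  weakExpUnstable_iff_datko_general E hdecay
end

section
/- Let X be a Banach space and let U be a weakly exponentially unstable evolution operator on X, with constants N ≥ 1 and ν > 0. Then for every p ≥ 1, setting K = N^p/(νp) > 0, for each x₀ ∈ X there exists t₀ ≥ 0 such that ∫_{t₀}^{t} ‖U(τ,t₀)x₀‖^p dτ ≤ K‖U(t,t₀)x₀‖^p for all t ≥ t₀. -/
open Real Set intervalIntegral

theorem EvolutionOperator.continuousOn_apply_left {X : Type*} [NormedAddCommGroup X]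
    [NormedSpace ℝ X] (E : EvolutionOperator X) {t₀ : ℝ} (ht₀ : 0 ≤ t₀) (x : X) :
    ContinuousOn (fun τ => E.U τ t₀ x) (Ici t₀) :=
  (E.cont x).comp (continuous_id.prodMk continuous_const).continuousOn
    fun _ hτ => ⟨ht₀, hτ⟩

theorem integral_exp_mul_sub_le_inv {c : ℝ} (hc : 0 < c) (a b : ℝ) :
    ∫ τ in a..b, exp (c * (τ - b)) ≤ c⁻¹ := by
  have hint : ∫ τ in a..b, exp (c * (τ - b)) = c⁻¹ * (1 - exp (c * (a - b))) := by
    rw [integral_comp_sub_right (fun u => exp (c * u)), integral_comp_mul_left exp hc.ne',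
      integral_exp]
    simp
  rw [hint]
  have := exp_pos (c * (a - b))
  have := inv_pos.2 hc
  nlinarith

theorem rpow_le_of_exp_mul_le_mul {N ν p s t a b : ℝ} (hN : 0 ≤ N) (hp : 0 ≤ p) (ha : 0 ≤ a)
    (hb : 0 ≤ b) (h : exp (ν * (t - s)) * a ≤ N * b) :
    a ^ p ≤ N ^ p * b ^ p * exp (ν * p * (s - t)) := calc
  a ^ p ≤ (N * b * exp (ν * (s - t))) ^ p := by
    refine rpow_le_rpow ha ?_ hp
    rwa [show ν * (s - t) = -(ν * (t - s)) by ring, exp_neg, ← div_eq_mul_inv,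
      le_div_iff₀ (exp_pos _), mul_comm]
  _ = N ^ p * b ^ p * exp (ν * p * (s - t)) := by
    rw [mul_rpow (by positivity) (exp_pos _).le, mul_rpow hN hb, ← exp_mul]
    ring_nf

theorem integral_rpow_le_of_exp_growth {u : ℝ → ℝ} {N ν p t₀ t : ℝ} (hN : 0 ≤ N) (hν : 0 < ν)
    (hp : 0 < p) (ht : t₀ ≤ t) (hu : ContinuousOn u (Icc t₀ t)) (hu₀ : ∀ τ, 0 ≤ u τ)
    (hgrowth : ∀ s ∈ Icc t₀ t, exp (ν * (t - s)) * u s ≤ N * u t) :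
    ∫ τ in t₀..t, u τ ^ p ≤ N ^ p / (ν * p) * u t ^ p := by
  set M := N ^ p * u t ^ p
  have hpointwise : ∀ τ ∈ Icc t₀ t, u τ ^ p ≤ M * exp (ν * p * (τ - t)) := fun τ hτ =>
    rpow_le_of_exp_mul_le_mul hN hp.le (hu₀ τ) (hu₀ t) (hgrowth τ hτ)
  have hint_u : IntervalIntegrable (fun τ => u τ ^ p) MeasureTheory.volume t₀ t :=
    (hu.rpow_const fun _ _ => Or.inr hp.le).intervalIntegrable_of_Icc ht
  calc ∫ τ in t₀..t, u τ ^ p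
      ≤ ∫ τ in t₀..t, M * exp (ν * p * (τ - t)) :=
        integral_mono_on ht hint_u
          ((by fun_prop : Continuous _).intervalIntegrable _ _) hpointwise
    _ = M * ∫ τ in t₀..t, exp (ν * p * (τ - t)) := integral_const_mul _ _
    _ ≤ M * (ν * p)⁻¹ :=
        mul_le_mul_of_nonneg_left (integral_exp_mul_sub_le_inv (by positivity) _ _)
          (mul_nonneg (rpow_nonneg hN _) (rpow_nonneg (hu₀ t) _))
    _ = N ^ p / (ν * p) * u t ^ p := by ring

theorem datko_necessity_general
    {X : Type*} [NormedAddCommGroup X] [NormedSpace ℝ X]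
    (E : EvolutionOperator X) (N ν : ℝ) (hN : 1 ≤ N) (hν : 0 < ν)
    (hweak : ∀ x₀ : X, ∃ t₀ : ℝ, 0 ≤ t₀ ∧ ∀ s t : ℝ, t₀ ≤ s → s ≤ t →
      N * ‖E.U t t₀ x₀‖ ≥ Real.exp (ν * (t - s)) * ‖E.U s t₀ x₀‖)
    (p : ℝ) (hp : 1 ≤ p) :
    ∀ x₀ : X, ∃ t₀ : ℝ, 0 ≤ t₀ ∧ ∀ t : ℝ, t₀ ≤ t →
      (∫ τ in t₀..t, ‖E.U τ t₀ x₀‖ ^ p) ≤ (N ^ p / (ν * p)) * ‖E.U t t₀ x₀‖ ^ p := by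
  intro x₀
  obtain ⟨t₀, ht₀, hgrowth⟩ := hweak x₀
  refine ⟨t₀, ht₀, fun t ht => ?_⟩
  refine integral_rpow_le_of_exp_growth (zero_le_one.trans hN) hν (by linarith) ht ?_
    (fun _ => norm_nonneg _) (fun s hs => hgrowth s t hs.1 hs.2)
  exact ((E.continuousOn_apply_left ht₀ x₀).mono Icc_subset_Ici_self).norm

/-- If `U` is weakly exponentially unstable with constants `N ≥ 1`, `ν > 0`, then for
every `p ≥ 1`, with `K = N^p / (ν p)`, for each `x₀` there is `t₀ ≥ 0` such that
`∫_{t₀}^t ‖U(τ,t₀)x₀‖^p dτ ≤ K ‖U(t,t₀)x₀‖^p` for all `t ≥ t₀`. -/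
theorem datko_necessity
    {X : Type*} [NormedAddCommGroup X] [NormedSpace ℝ X] [CompleteSpace X]
    (E : EvolutionOperator X) (N ν : ℝ) (hN : 1 ≤ N) (hν : 0 < ν)
    (hweak : ∀ x₀ : X, ∃ t₀ : ℝ, 0 ≤ t₀ ∧ ∀ s t : ℝ, t₀ ≤ s → s ≤ t →
      N * ‖E.U t t₀ x₀‖ ≥ Real.exp (ν * (t - s)) * ‖E.U s t₀ x₀‖)
    (p : ℝ) (hp : 1 ≤ p) :
    ∀ x₀ : X, ∃ t₀ : ℝ, 0 ≤ t₀ ∧ ∀ t : ℝ, t₀ ≤ t →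
      (∫ τ in t₀..t, ‖E.U τ t₀ x₀‖ ^ p) ≤ (N ^ p / (ν * p)) * ‖E.U t t₀ x₀‖ ^ p :=
  datko_necessity_general E N ν hN hν hweak p hp
end

section
/- Let X be a Banach space and let U be an evolution operator on X with exponential decay, with constants M ≥ 1 and ω > 0. Suppose there exist p ≥ 1 and K > 0 such that for x₀ ∈ X and t₀ ≥ 0 one has ∫_{t₀}^{t} ‖U(τ,t₀)x₀‖^p dτ ≤ K‖U(t,t₀)x₀‖^p for all t ≥ t₀. Then, with L = min{ (1/(M^p K))·(1−e^{−ωp})/(ωp), e^{−ωp}/M^p }, one has ‖U(t,t₀)x₀‖^p ≥ L‖U(s,t₀)x₀‖^p for all t ≥ s ≥ t₀. -/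
lemma exp_int_aux (c : ℝ) (hc : 0 < c) (s : ℝ) :
    (∫ τ in s..(s+1), Real.exp (-(c * (τ - s)))) = (1 - Real.exp (-c)) / c := by
  have hc' : c ≠ 0 := hc.ne'
  have h1 : (∫ τ in s..(s+1), Real.exp (-(c * (τ - s))))
      = ∫ τ in (s-s)..(s+1-s), Real.exp (-(c * τ)) := by
    rw [← intervalIntegral.integral_comp_sub_right (fun τ => Real.exp (-(c * τ))) s]
  rw [h1, show s - s = (0:ℝ) by ring, show s + 1 - s = (1:ℝ) by ring]
  have h2 : (∫ τ in (0:ℝ)..1, Real.exp (-c * τ))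
      = (-c)⁻¹ • ∫ x in (-c*0)..(-c*1), Real.exp x :=
    intervalIntegral.integral_comp_mul_left Real.exp (neg_ne_zero.mpr hc')
  simp only [neg_mul] at h2 ⊢
  rw [h2, integral_exp]
  simp only [mul_zero, mul_one, neg_zero, Real.exp_zero, smul_eq_mul]
  rw [inv_neg, div_eq_mul_inv]
  ring

/-- Suppose `U` has exponential decay with constants `M ≥ 1`, `ω > 0`, and the Datko
integral condition holds for `x₀, t₀` with constants `p ≥ 1`, `K > 0`. Then with
`L = min ((1/(M^p K)) (1-e^(-ωp))/(ωp)) (e^(-ωp)/M^p)` one has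
`‖U(t,t₀)x₀‖^p ≥ L ‖U(s,t₀)x₀‖^p` for all `t ≥ s ≥ t₀`. -/
theorem datko_sufficiency_pointwise_bound
    {X : Type*} [NormedAddCommGroup X] [NormedSpace ℝ X] [CompleteSpace X]
    (E : EvolutionOperator X) (M ω : ℝ) (hM : 1 ≤ M) (hω : 0 < ω)
    (hdecay : ∀ t t₀ : ℝ, 0 ≤ t₀ → t₀ ≤ t → ∀ x₀ : X,
      M * ‖E.U t t₀ x₀‖ ≥ Real.exp (-ω * (t - t₀)) * ‖x₀‖)
    (p K : ℝ) (hp : 1 ≤ p) (hK : 0 < K)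
    (x₀ : X) (t₀ : ℝ) (ht₀ : 0 ≤ t₀)
    (hint : ∀ t : ℝ, t₀ ≤ t →
      (∫ τ in t₀..t, ‖E.U τ t₀ x₀‖ ^ p) ≤ K * ‖E.U t t₀ x₀‖ ^ p) :
    ∀ s t : ℝ, t₀ ≤ s → s ≤ t →
      ‖E.U t t₀ x₀‖ ^ p ≥
        min ((1 / (M ^ p * K)) * ((1 - Real.exp (-(ω * p))) / (ω * p)))
          (Real.exp (-(ω * p)) / M ^ p) * ‖E.U s t₀ x₀‖ ^ p := by
  intro s t hs hst
  set φ : ℝ → ℝ := fun τ => ‖E.U τ t₀ x₀‖ with hφ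
  have hp0 : (0:ℝ) ≤ p := le_trans zero_le_one hp
  have hpω : 0 < ω * p := mul_pos hω (lt_of_lt_of_le zero_lt_one hp)
  have hM0 : (0:ℝ) < M := lt_of_lt_of_le zero_lt_one hM
  have hMp : (0:ℝ) < M ^ p := Real.rpow_pos_of_pos hM0 p
  -- key pointwise estimate
  have key : ∀ a b : ℝ, t₀ ≤ a → a ≤ b →
      φ a ^ p ≤ M ^ p * Real.exp (ω * p * (b - a)) * φ b ^ p := by
    intro a b ha hab
    have h0a : (0:ℝ) ≤ a := le_trans ht₀ ha
    have h1 := hdecay b a h0a hab (E.U a t₀ x₀)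
    rw [E.cocycle b a t₀ ht₀ ha hab] at h1
    have h1' : Real.exp (-ω * (b - a)) * φ a ≤ M * φ b := h1
    have hprod : Real.exp (ω * (b - a)) * Real.exp (-ω * (b - a)) = 1 := by
      rw [← Real.exp_add, show ω * (b - a) + -ω * (b - a) = 0 by ring, Real.exp_zero]
    have h2 : φ a ≤ Real.exp (ω * (b - a)) * (M * φ b) := by
      have h2' := mul_le_mul_of_nonneg_left h1' (Real.exp_pos (ω * (b - a))).le
      calc φ a = (Real.exp (ω * (b - a)) * Real.exp (-ω * (b - a))) * φ a := by
            rw [hprod]; ring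
        _ = Real.exp (ω * (b - a)) * (Real.exp (-ω * (b - a)) * φ a) := by ring
        _ ≤ Real.exp (ω * (b - a)) * (M * φ b) := h2'
    have h3 := Real.rpow_le_rpow (norm_nonneg _) h2 hp0
    calc φ a ^ p ≤ (Real.exp (ω * (b - a)) * (M * φ b)) ^ p := h3
      _ = Real.exp (ω * (b-a)) ^ p * (M ^ p * φ b ^ p) := by
          rw [Real.mul_rpow (Real.exp_pos _).le (by positivity),
            Real.mul_rpow hM0.le (norm_nonneg _)]
      _ = M ^ p * Real.exp (ω * p * (b - a)) * φ b ^ p := by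
          rw [← Real.exp_mul]; ring_nf
  -- continuity of φ^p on [t₀, ∞)
  have hcont : ContinuousOn (fun τ => φ τ ^ p) (Set.Ici t₀) := by
    have h1 : ContinuousOn (fun τ : ℝ => E.U τ t₀ x₀) (Set.Ici t₀) := by
      have h2 := E.cont x₀
      have h3 : ContinuousOn (fun τ : ℝ => ((τ, t₀) : ℝ × ℝ)) (Set.Ici t₀) :=
        (continuous_id.prodMk continuous_const).continuousOn
      exact h2.comp h3 (fun τ hτ => ⟨ht₀, hτ⟩)
    have h4 : Continuous (fun y : ℝ => y ^ p) := by
      rw [continuous_iff_continuousAt]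
      intro x; exact Real.continuousAt_rpow_const x p (Or.inr hp0)
    exact h4.comp_continuousOn (h1.norm)
  have hnn : ∀ τ : ℝ, 0 ≤ φ τ ^ p := fun τ => Real.rpow_nonneg (norm_nonneg _) p
  rcases le_or_gt (t - s) 1 with hcase | hcase
  · -- short interval: use decay directly
    have h1 := key s t hs hst
    have h2 : Real.exp (ω * p * (t - s)) ≤ Real.exp (ω * p) := by
      apply Real.exp_le_exp.mpr
      nlinarith
    have h3 : φ s ^ p ≤ M ^ p * Real.exp (ω * p) * φ t ^ p := by
      calc φ s ^ p ≤ M ^ p * Real.exp (ω * p * (t - s)) * φ t ^ p := h1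
        _ ≤ M ^ p * Real.exp (ω * p) * φ t ^ p := by
            apply mul_le_mul_of_nonneg_right _ (hnn t)
            exact mul_le_mul_of_nonneg_left h2 hMp.le
    have hprod2 : Real.exp (-(ω * p)) * Real.exp (ω * p) = 1 := by
      rw [← Real.exp_add, neg_add_cancel, Real.exp_zero]
    have h4 : Real.exp (-(ω * p)) / M ^ p * φ s ^ p ≤ φ t ^ p := by
      rw [div_mul_eq_mul_div, div_le_iff₀ hMp]
      calc Real.exp (-(ω * p)) * φ s ^ p
          ≤ Real.exp (-(ω * p)) * (M ^ p * Real.exp (ω * p) * φ t ^ p) :=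
            mul_le_mul_of_nonneg_left h3 (Real.exp_pos _).le
        _ = (Real.exp (-(ω * p)) * Real.exp (ω * p)) * (M ^ p * φ t ^ p) := by ring
        _ = φ t ^ p * M ^ p := by rw [hprod2]; ring
    calc min ((1 / (M ^ p * K)) * ((1 - Real.exp (-(ω * p))) / (ω * p)))
          (Real.exp (-(ω * p)) / M ^ p) * φ s ^ p
        ≤ Real.exp (-(ω * p)) / M ^ p * φ s ^ p :=
          mul_le_mul_of_nonneg_right (min_le_right _ _) (hnn s)
      _ ≤ φ t ^ p := h4
  · -- long interval: integral argument on [s, s+1] ⊆ [t₀, t]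
    have hs1 : s + 1 ≤ t := by linarith
    have hsub1 : Set.uIcc t₀ t ⊆ Set.Ici t₀ := by
      rw [Set.uIcc_of_le (le_trans hs hst)]
      exact Set.Icc_subset_Ici_self
    have hsub2 : Set.uIcc s (s+1) ⊆ Set.Ici t₀ := by
      rw [Set.uIcc_of_le (by linarith : s ≤ s + 1)]
      intro y hy
      exact le_trans hs hy.1
    have hint2 : IntervalIntegrable (fun τ => φ τ ^ p) MeasureTheory.volume t₀ t :=
      (hcont.mono hsub1).intervalIntegrable
    have hint3 : IntervalIntegrable (fun τ => φ τ ^ p) MeasureTheory.volume s (s+1) :=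
      (hcont.mono hsub2).intervalIntegrable
    have hmono : (∫ τ in s..(s+1), φ τ ^ p) ≤ ∫ τ in t₀..t, φ τ ^ p := by
      apply intervalIntegral.integral_mono_interval hs (by linarith) hs1
      · exact MeasureTheory.ae_of_all _ (fun τ => hnn τ)
      · exact hint2
    set c : ℝ := ω * p with hc
    set D : ℝ := φ s ^ p / M ^ p with hD
    have hDnn : 0 ≤ D := by positivity
    have hlowcont : Continuous (fun τ : ℝ => Real.exp (-(c * (τ - s))) * D) := by
      apply Continuous.mul _ continuous_const
      exact Real.continuous_exp.comp (by continuity)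
    have hptwise : ∀ τ ∈ Set.Icc s (s+1),
        Real.exp (-(c * (τ - s))) * D ≤ φ τ ^ p := by
      intro τ hτ
      have hkey := key s τ hs hτ.1
      have hE : (0:ℝ) < Real.exp (c * (τ - s)) := Real.exp_pos _
      have h5 : φ s ^ p / (M ^ p * Real.exp (c * (τ - s))) ≤ φ τ ^ p := by
        rw [div_le_iff₀ (by positivity)]
        calc φ s ^ p ≤ M ^ p * Real.exp (c * (τ - s)) * φ τ ^ p := hkey
          _ = φ τ ^ p * (M ^ p * Real.exp (c * (τ - s))) := by ring
      have hprod : Real.exp (-(c * (τ - s))) * Real.exp (c * (τ - s)) = 1 := by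
        rw [← Real.exp_add, neg_add_cancel, Real.exp_zero]
      have hDM : D * M ^ p = φ s ^ p := div_mul_cancel₀ _ hMp.ne'
      have h6 : Real.exp (-(c * (τ - s))) * D
          = φ s ^ p / (M ^ p * Real.exp (c * (τ - s))) := by
        rw [eq_div_iff (by positivity : (M ^ p * Real.exp (c * (τ - s))) ≠ 0)]
        calc Real.exp (-(c * (τ - s))) * D * (M ^ p * Real.exp (c * (τ - s)))
            = (Real.exp (-(c * (τ - s))) * Real.exp (c * (τ - s))) * (D * M ^ p) := by ring
          _ = φ s ^ p := by rw [hprod, hDM, one_mul]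
      rw [h6]; exact h5
    have hlow : (∫ τ in s..(s+1), Real.exp (-(c * (τ - s))) * D)
        ≤ ∫ τ in s..(s+1), φ τ ^ p :=
      intervalIntegral.integral_mono_on (by linarith)
        (hlowcont.intervalIntegrable s (s+1)) hint3 hptwise
    have hcomp : (∫ τ in s..(s+1), Real.exp (-(c * (τ - s))) * D)
        = ((1 - Real.exp (-c)) / c) * D := by
      rw [intervalIntegral.integral_mul_const, exp_int_aux c hpω s]
    have hchain : ((1 - Real.exp (-c)) / c) * D ≤ K * φ t ^ p := by
      calc ((1 - Real.exp (-c)) / c) * D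
          = ∫ τ in s..(s+1), Real.exp (-(c * (τ - s))) * D := hcomp.symm
        _ ≤ ∫ τ in s..(s+1), φ τ ^ p := hlow
        _ ≤ ∫ τ in t₀..t, φ τ ^ p := hmono
        _ ≤ K * φ t ^ p := hint t (le_trans hs hst)
    have hgoal : (1 / (M ^ p * K)) * ((1 - Real.exp (-c)) / c) * φ s ^ p ≤ φ t ^ p := by
      have heq : (1 / (M ^ p * K)) * ((1 - Real.exp (-c)) / c) * φ s ^ p
          = (((1 - Real.exp (-c)) / c) * D) / K := by
        rw [hD]
        simp only [div_eq_mul_inv, one_div, mul_inv]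
        ring
      rw [heq, div_le_iff₀ hK]
      calc ((1 - Real.exp (-c)) / c) * D ≤ K * φ t ^ p := hchain
        _ = φ t ^ p * K := by ring
    calc min ((1 / (M ^ p * K)) * ((1 - Real.exp (-(ω * p))) / (ω * p)))
          (Real.exp (-(ω * p)) / M ^ p) * φ s ^ p
        ≤ (1 / (M ^ p * K)) * ((1 - Real.exp (-(ω * p))) / (ω * p)) * φ s ^ p :=
          mul_le_mul_of_nonneg_right (min_le_left _ _) (hnn s)
      _ ≤ φ t ^ p := hgoal
end

section
/- (Discrete Datko-type characterization) Let X be a Banach space and let U be an evolution operator on X with exponential decay. Then U is weakly exponentially unstable if and only if there exist p ≥ 1 and K > 0 such that for each x₀ ∈ X there exists t₀ ≥ 0 with ∑_{n=0}^{⌊t−t₀⌋} ‖U(t−n,t₀)x₀‖^p ≤ K‖U(t,t₀)x₀‖^p for all t ≥ t₀, where ⌊·⌋ denotes the integer part. -/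
private lemma bootstrap (φ : ℝ → ℝ) (hφ : ∀ t, 0 ≤ φ t) (C T t₀ : ℝ)
    (hT : 0 < T)
    (hB : ∀ s t, t₀ ≤ s → s ≤ t → φ s ≤ C * φ t)
    (hG : ∀ s, t₀ ≤ s → Real.exp 1 * φ s ≤ φ (s + T)) :
    ∀ s t, t₀ ≤ s → s ≤ t →
      Real.exp ((1/T) * (t - s)) * φ s ≤ (C * Real.exp 1) * φ t := by
  have iter : ∀ k : ℕ, ∀ s, t₀ ≤ s → Real.exp 1 ^ k * φ s ≤ φ (s + k * T) := by
    intro k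
    induction k with
    | zero => intro s hs; simp
    | succ n ih =>
      intro s hs
      have h1 := ih s hs
      have hn0 : (0:ℝ) ≤ (n:ℝ) := Nat.cast_nonneg n
      have h2 := hG (s + n * T) (by nlinarith [hT.le])
      calc Real.exp 1 ^ (n+1) * φ s = Real.exp 1 * (Real.exp 1 ^ n * φ s) := by ring
        _ ≤ Real.exp 1 * φ (s + n * T) := by
            exact mul_le_mul_of_nonneg_left h1 (Real.exp_pos 1).le
        _ ≤ φ (s + n * T + T) := h2
        _ = φ (s + (n+1 : ℕ) * T) := by push_cast; ring_nf
  intro s t hs hst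
  set k := ⌊(t - s)/T⌋₊ with hk
  have hk0 : (0:ℝ) ≤ (k:ℝ) := Nat.cast_nonneg k
  have hfl : (k : ℝ) ≤ (t - s)/T := Nat.floor_le (div_nonneg (by linarith) hT.le)
  have hkle : s + k * T ≤ t := by
    have := (le_div_iff₀ hT).mp hfl
    linarith
  have hup : (1/T) * (t - s) ≤ k + 1 := by
    have := (Nat.lt_floor_add_one ((t-s)/T)).le
    rw [div_le_iff₀ hT] at this
    rw [one_div, inv_mul_le_iff₀ hT]
    linarith
  calc Real.exp ((1/T) * (t - s)) * φ s
      ≤ Real.exp ((k:ℝ) + 1) * φ s := by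
        exact mul_le_mul_of_nonneg_right (Real.exp_le_exp.mpr hup) (hφ s)
    _ = Real.exp 1 * (Real.exp 1 ^ k * φ s) := by
        rw [Real.exp_add]
        have : Real.exp (k:ℝ) = Real.exp 1 ^ k := by
          rw [← Real.exp_nat_mul]; norm_num
        rw [this]; ring
    _ ≤ Real.exp 1 * φ (s + k * T) :=
        mul_le_mul_of_nonneg_left (iter k s hs) (Real.exp_pos 1).le
    _ ≤ Real.exp 1 * (C * φ t) := by
        refine mul_le_mul_of_nonneg_left ?_ (Real.exp_pos 1).le
        exact hB (s + k * T) t (by nlinarith [hT.le]) hkle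
    _ = (C * Real.exp 1) * φ t := by ring

/-- Discrete Datko-type characterization of weak exponential instability. -/
theorem weakExpUnstable_iff_discrete_datko
    {X : Type*} [NormedAddCommGroup X] [NormedSpace ℝ X] [CompleteSpace X]
    (E : EvolutionOperator X) (hdecay : ExpDecay E) :
    WeakExpUnstable E ↔
      ∃ p : ℝ, 1 ≤ p ∧ ∃ K : ℝ, 0 < K ∧ ∀ x₀ : X, ∃ t₀ : ℝ, 0 ≤ t₀ ∧
        ∀ t : ℝ, t₀ ≤ t →
          (∑ n ∈ Finset.range (⌊t - t₀⌋₊ + 1), ‖E.U (t - (n : ℝ)) t₀ x₀‖ ^ p) ≤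
            K * ‖E.U t t₀ x₀‖ ^ p := by
  obtain ⟨M, hM, ω, hω, hd⟩ := hdecay
  constructor
  · rintro ⟨N, hN, ν, hν, h⟩
    have hr : Real.exp (-ν) < 1 := Real.exp_lt_one_iff.mpr (by linarith)
    have hr0 : 0 < Real.exp (-ν) := Real.exp_pos _
    refine ⟨1, le_refl 1, N / (1 - Real.exp (-ν)), div_pos (by linarith) (by linarith), fun x₀ => ?_⟩
    obtain ⟨t₀, ht₀, hx⟩ := h x₀
    refine ⟨t₀, ht₀, fun t ht => ?_⟩
    simp only [Real.rpow_one]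
    have hterm : ∀ n ∈ Finset.range (⌊t - t₀⌋₊ + 1),
        ‖E.U (t - (n:ℝ)) t₀ x₀‖ ≤ Real.exp (-ν) ^ n * (N * ‖E.U t t₀ x₀‖) := by
      intro n hn
      rw [Finset.mem_range] at hn
      have hn0 : (0:ℝ) ≤ (n:ℝ) := Nat.cast_nonneg n
      have hn' : (n : ℝ) ≤ t - t₀ := by
        have h1 : (n:ℝ) ≤ (⌊t - t₀⌋₊ : ℝ) := by exact_mod_cast Nat.lt_add_one_iff.mp hn
        exact h1.trans (Nat.floor_le (by linarith))
      have hx' := hx (t - n) t (by linarith) (by linarith)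
      have he : Real.exp (ν * (t - (t - n))) = (Real.exp (-ν) ^ n)⁻¹ := by
        rw [← Real.exp_nat_mul, ← Real.exp_neg]
        congr 1; ring
      rw [ge_iff_le, he] at hx'
      have hrp : 0 < Real.exp (-ν) ^ n := pow_pos hr0 n
      rw [inv_mul_le_iff₀ hrp] at hx'
      exact hx'
    calc (∑ n ∈ Finset.range (⌊t - t₀⌋₊ + 1), ‖E.U (t - (n:ℝ)) t₀ x₀‖)
        ≤ ∑ n ∈ Finset.range (⌊t - t₀⌋₊ + 1), Real.exp (-ν) ^ n * (N * ‖E.U t t₀ x₀‖) :=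
          Finset.sum_le_sum hterm
      _ = (∑ n ∈ Finset.range (⌊t - t₀⌋₊ + 1), Real.exp (-ν) ^ n) * (N * ‖E.U t t₀ x₀‖) := by
          rw [Finset.sum_mul]
      _ ≤ (1 / (1 - Real.exp (-ν))) * (N * ‖E.U t t₀ x₀‖) := by
          refine mul_le_mul_of_nonneg_right ?_
            (mul_nonneg (by linarith) (norm_nonneg _))
          have hgeo := geom_sum_eq (ne_of_lt hr) (⌊t - t₀⌋₊ + 1)
          rw [hgeo]
          have hpow : 0 ≤ Real.exp (-ν) ^ (⌊t - t₀⌋₊ + 1) := by positivity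
          have heq : (Real.exp (-ν) ^ (⌊t - t₀⌋₊ + 1) - 1) / (Real.exp (-ν) - 1)
              = (1 - Real.exp (-ν) ^ (⌊t - t₀⌋₊ + 1)) / (1 - Real.exp (-ν)) := by
            rw [← neg_div_neg_eq]; ring_nf
          rw [heq, div_le_div_iff₀ (by linarith) (by linarith)]
          nlinarith
      _ = N / (1 - Real.exp (-ν)) * ‖E.U t t₀ x₀‖ := by ring
  · rintro ⟨p, hp, K, hK, h⟩
    have hp0 : 0 < p := by linarith
    set C : ℝ := M * Real.exp ω * K ^ p⁻¹ with hC
    have hC0 : 0 < C := by positivity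
    set T : ℝ := K * C ^ p * Real.exp p + 1 with hTdef
    have hT0 : 0 < T := by positivity
    refine ⟨C * Real.exp 1 + 1, by nlinarith [Real.exp_pos 1, hC0], 1/T, by positivity,
      fun x₀ => ?_⟩
    obtain ⟨t₀, ht₀, hx⟩ := h x₀
    set φ : ℝ → ℝ := fun u => ‖E.U u t₀ x₀‖ with hφdef
    have hφ : ∀ u, 0 ≤ φ u := fun u => norm_nonneg _
    -- single-term bound
    have hsingle : ∀ t : ℝ, t₀ ≤ t → ∀ n : ℕ, (n:ℝ) ≤ t - t₀ →
        φ (t - n) ≤ K ^ p⁻¹ * φ t := by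
      intro t ht n hn
      have hmem : n ∈ Finset.range (⌊t - t₀⌋₊ + 1) := by
        rw [Finset.mem_range, Nat.lt_add_one_iff]
        exact Nat.le_floor hn
      have hterm : φ (t - n) ^ p ≤ K * φ t ^ p := by
        refine le_trans ?_ (hx t ht)
        exact Finset.single_le_sum
          (f := fun i : ℕ => ‖E.U (t - (i:ℝ)) t₀ x₀‖ ^ p)
          (fun i _ => Real.rpow_nonneg (norm_nonneg _) p) hmem
      have h1 : (φ (t - n) ^ p) ^ p⁻¹ ≤ (K * φ t ^ p) ^ p⁻¹ :=
        Real.rpow_le_rpow (Real.rpow_nonneg (hφ _) p) hterm (by positivity)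
      rwa [Real.rpow_rpow_inv (hφ _) (ne_of_gt hp0),
        Real.mul_rpow hK.le (Real.rpow_nonneg (hφ _) p),
        Real.rpow_rpow_inv (hφ _) (ne_of_gt hp0)] at h1
    -- step B
    have hB : ∀ s t : ℝ, t₀ ≤ s → s ≤ t → φ s ≤ C * φ t := by
      intro s t hs hst
      set n := ⌊t - s⌋₊ with hn
      have hn0 : (0:ℝ) ≤ (n:ℝ) := Nat.cast_nonneg n
      have hnle : (n:ℝ) ≤ t - s := Nat.floor_le (by linarith)
      have hngt : t - s - 1 < (n:ℝ) := Nat.sub_one_lt_floor (t - s)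
      have hτ : t₀ ≤ t - n := by linarith
      have hst' : t₀ ≤ t := le_trans hs hst
      have hs0 : (0:ℝ) ≤ s := le_trans ht₀ hs
      have h1 : φ (t - n) ≤ K ^ p⁻¹ * φ t := hsingle t hst' n (by linarith)
      -- decay from s to t - n
      have hd' := hd (t - n) s hs0 (by linarith) (E.U s t₀ x₀)
      rw [E.cocycle (t - n) s t₀ ht₀ hs (by linarith)] at hd'
      have h2 : φ s ≤ M * Real.exp (ω * ((t - n) - s)) * φ (t - n) := by
        rw [ge_iff_le] at hd'
        have h3 : Real.exp (-ω * ((t - n) - s)) * φ s ≤ M * φ (t - n) := hd'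
        have hepos : (0:ℝ) < Real.exp (ω * ((t - n) - s)) := Real.exp_pos _
        have h4 := mul_le_mul_of_nonneg_left h3 hepos.le
        have e1 : Real.exp (ω * ((t - n) - s)) *
            (Real.exp (-ω * ((t - n) - s)) * φ s) = φ s := by
          rw [← mul_assoc, ← Real.exp_add,
            show ω * ((t - n) - s) + -ω * ((t - n) - s) = 0 by ring,
            Real.exp_zero, one_mul]
        calc φ s = Real.exp (ω * ((t - n) - s)) *
              (Real.exp (-ω * ((t - n) - s)) * φ s) := e1.symm
          _ ≤ Real.exp (ω * ((t - n) - s)) * (M * φ (t - n)) := h4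
          _ = M * Real.exp (ω * ((t - n) - s)) * φ (t - n) := by ring
      have hee : Real.exp (ω * ((t - n) - s)) ≤ Real.exp ω := by
        apply Real.exp_le_exp.mpr
        nlinarith
      calc φ s ≤ M * Real.exp (ω * ((t - n) - s)) * φ (t - n) := h2
        _ ≤ M * Real.exp ω * φ (t - n) := by
            refine mul_le_mul_of_nonneg_right ?_ (hφ _)
            exact mul_le_mul_of_nonneg_left hee (by linarith)
        _ ≤ M * Real.exp ω * (K ^ p⁻¹ * φ t) := by
            refine mul_le_mul_of_nonneg_left h1 (by positivity)
        _ = C * φ t := by rw [hC]; ring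
    -- step C
    have hCgrow : ∀ s t : ℝ, t₀ ≤ s → s ≤ t → (t - s) * φ s ^ p ≤ K * C ^ p * φ t ^ p := by
      intro s t hs hst
      have hst' : t₀ ≤ t := le_trans hs hst
      have hsub : Finset.range (⌊t - s⌋₊ + 1) ⊆ Finset.range (⌊t - t₀⌋₊ + 1) := by
        apply Finset.range_subset_range.mpr
        exact Nat.add_le_add_right (Nat.floor_mono (by linarith)) 1
      have hsum1 : ∑ n ∈ Finset.range (⌊t - s⌋₊ + 1), φ (t - n) ^ p ≤ K * φ t ^ p := by
        refine le_trans ?_ (hx t hst')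
        exact Finset.sum_le_sum_of_subset_of_nonneg hsub
          (fun i _ _ => Real.rpow_nonneg (hφ _) p)
      have hlow : ∀ n ∈ Finset.range (⌊t - s⌋₊ + 1), (φ s / C) ^ p ≤ φ (t - n) ^ p := by
        intro n hn
        rw [Finset.mem_range, Nat.lt_add_one_iff] at hn
        have hn' : (n:ℝ) ≤ t - s := le_trans (by exact_mod_cast Nat.cast_le.mpr hn)
          (Nat.floor_le (by linarith))
        have hsn : s ≤ t - n := by linarith
        have := hB s (t - n) hs hsn
        refine Real.rpow_le_rpow (by positivity) ?_ hp0.le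
        rw [div_le_iff₀ hC0]; linarith
      have hcard : (t - s) ≤ ((⌊t - s⌋₊ : ℝ) + 1) := by
        have := Nat.lt_floor_add_one (t - s); linarith
      have hsum2 : ((⌊t - s⌋₊ : ℝ) + 1) * (φ s / C) ^ p ≤
          ∑ n ∈ Finset.range (⌊t - s⌋₊ + 1), φ (t - n) ^ p := by
        have := Finset.card_nsmul_le_sum (Finset.range (⌊t - s⌋₊ + 1))
          (fun n => φ (t - n) ^ p) ((φ s / C) ^ p) hlow
        simpa [Finset.card_range, nsmul_eq_mul] using this
      have hq : (t - s) * (φ s / C) ^ p ≤ K * φ t ^ p := by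
        have h0 : 0 ≤ (φ s / C) ^ p := Real.rpow_nonneg (by positivity) p
        nlinarith
      have hdiv : (φ s / C) ^ p = φ s ^ p / C ^ p := Real.div_rpow (hφ _) hC0.le p
      rw [hdiv] at hq
      have hCp : 0 < C ^ p := Real.rpow_pos_of_pos hC0 p
      rw [div_eq_mul_inv, ← mul_assoc] at hq
      calc (t - s) * φ s ^ p = ((t - s) * φ s ^ p * (C ^ p)⁻¹) * C ^ p := by
            field_simp
        _ ≤ (K * φ t ^ p) * C ^ p := mul_le_mul_of_nonneg_right hq hCp.le
        _ = K * C ^ p * φ t ^ p := by ring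
    -- step D : growth over T
    have hG : ∀ s, t₀ ≤ s → Real.exp 1 * φ s ≤ φ (s + T) := by
      intro s hs
      have h1 := hCgrow s (s + T) hs (by linarith)
      have h2 : (s + T - s) = T := by ring
      rw [h2] at h1
      have hKC : 0 < K * C ^ p := by positivity
      have h3 : Real.exp p * φ s ^ p ≤ φ (s + T) ^ p := by
        have hTge : K * C ^ p * Real.exp p ≤ T := by
          rw [hTdef]; linarith
        have h4 : K * C ^ p * Real.exp p * φ s ^ p ≤ T * φ s ^ p :=
          mul_le_mul_of_nonneg_right hTge (Real.rpow_nonneg (hφ _) p)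
        have h5 : K * C ^ p * Real.exp p * φ s ^ p ≤ K * C ^ p * φ (s + T) ^ p := by
          linarith
        nlinarith [Real.exp_pos p, Real.rpow_nonneg (hφ s) p]
      have h6 : (Real.exp 1 * φ s) ^ p ≤ φ (s + T) ^ p := by
        rw [Real.mul_rpow (Real.exp_pos 1).le (hφ _), Real.exp_one_rpow]
        exact h3
      have h7 := Real.rpow_le_rpow (by positivity) h6 (by positivity : (0:ℝ) ≤ p⁻¹)
      rwa [Real.rpow_rpow_inv (by positivity) (ne_of_gt hp0),
        Real.rpow_rpow_inv (hφ _) (ne_of_gt hp0)] at h7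
    -- conclude via bootstrap
    refine ⟨t₀, ht₀, fun s t hs hst => ?_⟩
    have := bootstrap φ hφ C T t₀ hT0 hB hG s t hs hst
    have hφt := hφ t
    calc Real.exp (1/T * (t - s)) * φ s ≤ (C * Real.exp 1) * φ t := this
      _ ≤ (C * Real.exp 1 + 1) * φ t := by nlinarith
end

section
/- Let X be a Banach space and let U be a weakly exponentially unstable evolution operator on X, with constants N ≥ 1 and ν > 0. Then for every p ≥ 1, setting K = N^p/(1 − e^{−νp}) > 0, for each x₀ ∈ X there exists t₀ ≥ 0 such that ∑_{n=0}^{⌊t−t₀⌋} ‖U(t−n,t₀)x₀‖^p ≤ K‖U(t,t₀)x₀‖^p for all t ≥ t₀, where ⌊·⌋ denotes the integer part. -/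
open Real Finset

lemma sum_range_le_div_one_sub_of_le_geom {f : ℕ → ℝ} {C r : ℝ} {m : ℕ} (hC : 0 ≤ C)
    (hr₀ : 0 ≤ r) (hr₁ : r < 1) (hf : ∀ i < m, f i ≤ C * r ^ i) :
    ∑ i ∈ range m, f i ≤ C / (1 - r) := calc
  ∑ i ∈ range m, f i ≤ ∑ i ∈ range m, C * r ^ i :=
    Finset.sum_le_sum fun i hi => hf i (mem_range.1 hi)
  _ = C * ∑ i ∈ range m, r ^ i := (Finset.mul_sum ..).symm
  _ ≤ C * (1 / (1 - r)) := by
    gcongr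
    simpa only [← range_eq_Ico, pow_zero] using
      geom_sum_Ico_le_of_lt_one (m := 0) (n := m) hr₀ hr₁
  _ = C / (1 - r) := mul_one_div C (1 - r)

lemma rpow_le_mul_exp_neg_pow {a b N ν p : ℝ} {n : ℕ} (ha : 0 ≤ a) (hb : 0 ≤ b) (hN : 0 ≤ N)
    (hp : 0 ≤ p) (h : exp (ν * n) * b ≤ N * a) :
    b ^ p ≤ N ^ p * a ^ p * exp (-(ν * p)) ^ n := by
  have hb' : b ≤ N * a * exp (-(ν * n)) := by
    rwa [exp_neg, ← div_eq_mul_inv, le_div_iff₀' (exp_pos _)]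
  calc b ^ p ≤ (N * a * exp (-(ν * n))) ^ p := rpow_le_rpow hb hb' hp
    _ = N ^ p * a ^ p * exp (-(ν * p)) ^ n := by
      rw [mul_rpow (by positivity) (exp_pos _).le, mul_rpow hN ha, ← exp_mul, ← exp_nat_mul]
      ring_nf

theorem sum_rpow_sub_nat_le_of_exp_growth {g : ℝ → ℝ} {N ν p t₀ t : ℝ} (hg : ∀ s, 0 ≤ g s)
    (hN : 0 ≤ N) (hν : 0 < ν) (hp : 0 < p)
    (hgrowth : ∀ s t, t₀ ≤ s → s ≤ t → exp (ν * (t - s)) * g s ≤ N * g t) (ht : t₀ ≤ t) :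
    ∑ n ∈ range (⌊t - t₀⌋₊ + 1), g (t - n) ^ p ≤
      N ^ p / (1 - exp (-(ν * p))) * g t ^ p := by
  have hr₁ : exp (-(ν * p)) < 1 := exp_lt_one_iff.2 (neg_neg_of_pos (mul_pos hν hp))
  rw [div_mul_eq_mul_div]
  refine sum_range_le_div_one_sub_of_le_geom
    (mul_nonneg (rpow_nonneg hN _) (rpow_nonneg (hg t) _)) (exp_pos _).le hr₁ fun n hn => ?_
  have hn' : (n : ℝ) ≤ t - t₀ :=
    (Nat.le_floor_iff (sub_nonneg.2 ht)).1 (Nat.lt_succ_iff.1 hn)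
  have h := hgrowth (t - n) t (by linarith) (by linarith [n.cast_nonneg (α := ℝ)])
  rw [sub_sub_cancel] at h
  exact rpow_le_mul_exp_neg_pow (hg t) (hg _) hN hp.le h

theorem discrete_datko_necessity_general
    {X : Type*} [NormedAddCommGroup X] [NormedSpace ℝ X]
    (E : EvolutionOperator X) (N ν : ℝ) (hN : 1 ≤ N) (hν : 0 < ν)
    (hweak : ∀ x₀ : X, ∃ t₀ : ℝ, 0 ≤ t₀ ∧ ∀ s t : ℝ, t₀ ≤ s → s ≤ t →
      N * ‖E.U t t₀ x₀‖ ≥ Real.exp (ν * (t - s)) * ‖E.U s t₀ x₀‖)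
    (p : ℝ) (hp : 1 ≤ p) :
    ∀ x₀ : X, ∃ t₀ : ℝ, 0 ≤ t₀ ∧ ∀ t : ℝ, t₀ ≤ t →
      (∑ n ∈ Finset.range (⌊t - t₀⌋₊ + 1), ‖E.U (t - (n : ℝ)) t₀ x₀‖ ^ p) ≤
        (N ^ p / (1 - Real.exp (-(ν * p)))) * ‖E.U t t₀ x₀‖ ^ p := by
  intro x₀
  obtain ⟨t₀, ht₀, hgrowth⟩ := hweak x₀
  exact ⟨t₀, ht₀, fun t ht => sum_rpow_sub_nat_le_of_exp_growth (fun _ => norm_nonneg _)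
    (by linarith) hν (by linarith) hgrowth ht⟩

/-- If `U` is weakly exponentially unstable with constants `N ≥ 1`, `ν > 0`, then for
every `p ≥ 1`, with `K = N^p / (1 - e^(-νp))`, for each `x₀` there is `t₀ ≥ 0` with
`∑_{n=0}^{⌊t-t₀⌋} ‖U(t-n,t₀)x₀‖^p ≤ K ‖U(t,t₀)x₀‖^p` for all `t ≥ t₀`. -/
theorem discrete_datko_necessity
    {X : Type*} [NormedAddCommGroup X] [NormedSpace ℝ X] [CompleteSpace X]
    (E : EvolutionOperator X) (N ν : ℝ) (hN : 1 ≤ N) (hν : 0 < ν)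
    (hweak : ∀ x₀ : X, ∃ t₀ : ℝ, 0 ≤ t₀ ∧ ∀ s t : ℝ, t₀ ≤ s → s ≤ t →
      N * ‖E.U t t₀ x₀‖ ≥ Real.exp (ν * (t - s)) * ‖E.U s t₀ x₀‖)
    (p : ℝ) (hp : 1 ≤ p) :
    ∀ x₀ : X, ∃ t₀ : ℝ, 0 ≤ t₀ ∧ ∀ t : ℝ, t₀ ≤ t →
      (∑ n ∈ Finset.range (⌊t - t₀⌋₊ + 1), ‖E.U (t - (n : ℝ)) t₀ x₀‖ ^ p) ≤
        (N ^ p / (1 - Real.exp (-(ν * p)))) * ‖E.U t t₀ x₀‖ ^ p :=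
  discrete_datko_necessity_general E N ν hN hν hweak p hp
end

section
/- Let X be a Banach space and let U be an evolution operator on X with exponential decay, with constants M ≥ 1 and ω > 0. Suppose x₀ ∈ X, t₀ ≥ 0, p ≥ 1, K > 0 satisfy ∑_{n=0}^{⌊t−t₀⌋} ‖U(t−n,t₀)x₀‖^p ≤ K‖U(t,t₀)x₀‖^p for all t ≥ t₀, where ⌊·⌋ denotes the integer part. Then ∫_{t₀}^{t} ‖U(τ,t₀)x₀‖^p dτ ≤ K M^p e^{ωp} ‖U(t,t₀)x₀‖^p for all t ≥ t₀. -/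
open Set MeasureTheory

/-- Cut `[t₀, t]` at the points `t - n` into pieces of length at most one; on the piece ending
at `t - n` the integrand is at most `C * f (t - n)`. -/
theorem integral_le_mul_sum_sub_nat {f : ℝ → ℝ} {C t₀ t : ℝ} (ht : t₀ ≤ t)
    (hint : IntervalIntegrable f volume t₀ t) (hf0 : ∀ τ, 0 ≤ f τ)
    (hf : ∀ τ s, t₀ ≤ τ → τ ≤ s → s ≤ τ + 1 → f τ ≤ C * f s) :
    ∫ τ in t₀..t, f τ ≤ C * ∑ n ∈ Finset.range (⌊t - t₀⌋₊ + 1), f (t - n) := by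
  set N := ⌊t - t₀⌋₊
  set b : ℕ → ℝ := fun n => max t₀ (t - n) with hb
  have hb_mem : ∀ n, b n ∈ Icc t₀ t := fun n =>
    ⟨le_max_left _ _, max_le ht (by linarith [n.cast_nonneg (α := ℝ)])⟩
  have hb_succ : ∀ n, b (n + 1) ≤ b n := fun n =>
    max_le_max le_rfl (by push_cast; linarith)
  have hb_of_le : ∀ n ≤ N, b n = t - n := fun n hn => max_eq_right <| by
    have : (n : ℝ) ≤ N := by exact_mod_cast hn
    linarith [Nat.floor_le (sub_nonneg.mpr ht)]
  have hb_zero : b 0 = t := by simp [hb, ht]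
  have hb_last : b (N + 1) = t₀ := max_eq_left <| by
    push_cast; linarith [Nat.lt_floor_add_one (t - t₀)]
  have hsplit :
      ∫ τ in t₀..t, f τ = ∑ n ∈ Finset.range (N + 1), ∫ τ in b (n + 1)..b n, f τ := by
    have hpieces : ∀ n < N + 1, IntervalIntegrable f volume (b n) (b (n + 1)) := fun n _ =>
      hint.mono_set <| uIcc_subset_uIcc (Icc_subset_uIcc (hb_mem n)) (Icc_subset_uIcc (hb_mem _))
    rw [intervalIntegral.integral_symm, ← hb_zero, ← hb_last,
      ← intervalIntegral.sum_integral_adjacent_intervals hpieces, ← Finset.sum_neg_distrib]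
    exact Finset.sum_congr rfl fun n _ => (intervalIntegral.integral_symm _ _).symm
  have hpiece : ∀ n ≤ N, ∫ τ in b (n + 1)..b n, f τ ≤ C * f (t - n) := by
    intro n hn
    have hbn := hb_of_le n hn
    have hgap : b n ≤ b (n + 1) + 1 := by
      have : t - (n + 1 : ℕ) ≤ b (n + 1) := le_max_right _ _
      push_cast at this
      linarith
    have hbound : ∀ τ ∈ uIoc (b (n + 1)) (b n), ‖f τ‖ ≤ C * f (b n) := by
      intro τ hτ
      rw [uIoc_of_le (hb_succ n)] at hτ
      rw [Real.norm_of_nonneg (hf0 τ)]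
      exact hf τ _ ((hb_mem _).1.trans hτ.1.le) hτ.2 (by linarith [hτ.1])
    have hCf : 0 ≤ C * f (b n) := (hf0 _).trans (hf _ _ (hb_mem n).1 le_rfl (by linarith))
    calc ∫ τ in b (n + 1)..b n, f τ
        ≤ ‖∫ τ in b (n + 1)..b n, f τ‖ := Real.le_norm_self _
      _ ≤ C * f (b n) * |b n - b (n + 1)| :=
        intervalIntegral.norm_integral_le_of_norm_le_const hbound
      _ ≤ C * f (b n) := by
        rw [abs_of_nonneg (sub_nonneg.mpr (hb_succ n))]
        exact mul_le_of_le_one_right hCf (by linarith)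
      _ = C * f (t - n) := by rw [hbn]
  rw [hsplit, Finset.mul_sum]
  exact Finset.sum_le_sum fun n hn => hpiece n (Nat.lt_succ_iff.mp (Finset.mem_range.mp hn))

namespace EvolutionOperator

variable {X : Type*} [NormedAddCommGroup X] [NormedSpace ℝ X]

def HasExponentialDecayWith (E : EvolutionOperator X) (M ω : ℝ) : Prop :=
  ∀ t t₀ : ℝ, 0 ≤ t₀ → t₀ ≤ t → ∀ x₀ : X,
    M * ‖E.U t t₀ x₀‖ ≥ Real.exp (-ω * (t - t₀)) * ‖x₀‖

theorem continuousOn_orbit (E : EvolutionOperator X) {t₀ : ℝ} (ht₀ : 0 ≤ t₀) (x : X) :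
    ContinuousOn (fun τ => E.U τ t₀ x) (Ici t₀) :=
  (E.cont x).comp (Continuous.prodMk_left t₀).continuousOn fun _ hτ => ⟨ht₀, hτ⟩

variable {E : EvolutionOperator X} {M ω : ℝ} {t₀ τ s : ℝ}

theorem HasExponentialDecayWith.norm_le (hE : E.HasExponentialDecayWith M ω) (ht₀ : 0 ≤ t₀)
    (hτ : t₀ ≤ τ) (hτs : τ ≤ s) (x : X) :
    ‖E.U τ t₀ x‖ ≤ M * Real.exp (ω * (s - τ)) * ‖E.U s t₀ x‖ := by
  have h := hE s τ (ht₀.trans hτ) hτs (E.U τ t₀ x)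
  rw [E.cocycle s τ t₀ ht₀ hτ hτs, neg_mul, Real.exp_neg, ge_iff_le,
    inv_mul_le_iff₀ (Real.exp_pos _)] at h
  linarith

theorem HasExponentialDecayWith.rpow_norm_le (hE : E.HasExponentialDecayWith M ω) (hM : 0 ≤ M)
    (hω : 0 ≤ ω) {p : ℝ} (hp : 0 ≤ p) (ht₀ : 0 ≤ t₀) (hτ : t₀ ≤ τ) (hτs : τ ≤ s)
    (hs : s ≤ τ + 1) (x : X) :
    ‖E.U τ t₀ x‖ ^ p ≤ M ^ p * Real.exp (ω * p) * ‖E.U s t₀ x‖ ^ p := by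
  have hexp : Real.exp (ω * (s - τ)) ≤ Real.exp ω :=
    Real.exp_le_exp.mpr (mul_le_of_le_one_right hω (by linarith))
  have h : ‖E.U τ t₀ x‖ ≤ M * Real.exp ω * ‖E.U s t₀ x‖ :=
    (hE.norm_le ht₀ hτ hτs x).trans (by gcongr)
  calc ‖E.U τ t₀ x‖ ^ p ≤ (M * Real.exp ω * ‖E.U s t₀ x‖) ^ p :=
        Real.rpow_le_rpow (norm_nonneg _) h hp
    _ = M ^ p * Real.exp (ω * p) * ‖E.U s t₀ x‖ ^ p := by
        rw [Real.mul_rpow (by positivity) (norm_nonneg _),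
          Real.mul_rpow hM (Real.exp_pos ω).le, Real.exp_mul]

end EvolutionOperator

theorem discrete_datko_implies_integral_datko_general
    {X : Type*} [NormedAddCommGroup X] [NormedSpace ℝ X]
    (E : EvolutionOperator X) (M ω : ℝ) (hM : 1 ≤ M) (hω : 0 < ω)
    (hdecay : ∀ t t₀ : ℝ, 0 ≤ t₀ → t₀ ≤ t → ∀ x₀ : X,
      M * ‖E.U t t₀ x₀‖ ≥ Real.exp (-ω * (t - t₀)) * ‖x₀‖)
    (p K : ℝ) (hp : 1 ≤ p)
    (x₀ : X) (t₀ : ℝ) (ht₀ : 0 ≤ t₀)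
    (hsum : ∀ t : ℝ, t₀ ≤ t →
      (∑ n ∈ Finset.range (⌊t - t₀⌋₊ + 1), ‖E.U (t - (n : ℝ)) t₀ x₀‖ ^ p) ≤
        K * ‖E.U t t₀ x₀‖ ^ p) :
    ∀ t : ℝ, t₀ ≤ t →
      (∫ τ in t₀..t, ‖E.U τ t₀ x₀‖ ^ p) ≤
        K * M ^ p * Real.exp (ω * p) * ‖E.U t t₀ x₀‖ ^ p := by
  intro t ht
  have hint : IntervalIntegrable (fun τ => ‖E.U τ t₀ x₀‖ ^ p) volume t₀ t :=
    (((E.continuousOn_orbit ht₀ x₀).mono Icc_subset_Ici_self).norm.rpow_const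
      fun _ _ => Or.inr (by linarith)).intervalIntegrable_of_Icc ht
  have hE : E.HasExponentialDecayWith M ω := hdecay
  have hlocal : ∀ τ s, t₀ ≤ τ → τ ≤ s → s ≤ τ + 1 →
      ‖E.U τ t₀ x₀‖ ^ p ≤ M ^ p * Real.exp (ω * p) * ‖E.U s t₀ x₀‖ ^ p :=
    fun τ s hτ hτs hs => hE.rpow_norm_le (by linarith) hω.le (by linarith) ht₀ hτ hτs hs x₀
  calc (∫ τ in t₀..t, ‖E.U τ t₀ x₀‖ ^ p)
      ≤ M ^ p * Real.exp (ω * p) *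
          ∑ n ∈ Finset.range (⌊t - t₀⌋₊ + 1), ‖E.U (t - n) t₀ x₀‖ ^ p :=
        integral_le_mul_sum_sub_nat ht hint (fun _ => Real.rpow_nonneg (norm_nonneg _) p) hlocal
    _ ≤ M ^ p * Real.exp (ω * p) * (K * ‖E.U t t₀ x₀‖ ^ p) := by gcongr; exact hsum t ht
    _ = K * M ^ p * Real.exp (ω * p) * ‖E.U t t₀ x₀‖ ^ p := by ring

/-- If `U` has exponential decay with constants `M ≥ 1`, `ω > 0`, and the discrete Datko
sum condition holds for `x₀, t₀` with constants `p ≥ 1`, `K > 0`, then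
`∫_{t₀}^t ‖U(τ,t₀)x₀‖^p dτ ≤ K M^p e^(ωp) ‖U(t,t₀)x₀‖^p` for all `t ≥ t₀`. -/
theorem discrete_datko_implies_integral_datko
    {X : Type*} [NormedAddCommGroup X] [NormedSpace ℝ X] [CompleteSpace X]
    (E : EvolutionOperator X) (M ω : ℝ) (hM : 1 ≤ M) (hω : 0 < ω)
    (hdecay : ∀ t t₀ : ℝ, 0 ≤ t₀ → t₀ ≤ t → ∀ x₀ : X,
      M * ‖E.U t t₀ x₀‖ ≥ Real.exp (-ω * (t - t₀)) * ‖x₀‖)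
    (p K : ℝ) (hp : 1 ≤ p) (hK : 0 < K)
    (x₀ : X) (t₀ : ℝ) (ht₀ : 0 ≤ t₀)
    (hsum : ∀ t : ℝ, t₀ ≤ t →
      (∑ n ∈ Finset.range (⌊t - t₀⌋₊ + 1), ‖E.U (t - (n : ℝ)) t₀ x₀‖ ^ p) ≤
        K * ‖E.U t t₀ x₀‖ ^ p) :
    ∀ t : ℝ, t₀ ≤ t →
      (∫ τ in t₀..t, ‖E.U τ t₀ x₀‖ ^ p) ≤
        K * M ^ p * Real.exp (ω * p) * ‖E.U t t₀ x₀‖ ^ p :=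
  discrete_datko_implies_integral_datko_general E M ω hM hω hdecay p K hp x₀ t₀ ht₀ hsum
end

section
/- (Lyapunov-type characterization) Let X be a Banach space and let U be an evolution operator on X with exponential decay. Then U is weakly exponentially unstable if and only if there exist a Lyapunov function L : T × X → ℝ₋ for U taking nonpositive values and a constant m > 0 such that for each x₀ ∈ X there is t₀ ≥ 0 with |L(t,t₀,x₀)| ≤ m‖U(t,t₀)x₀‖² for all t ≥ t₀ (the same t₀ for which L solves the Lyapunov equation). -/
open MeasureTheory Set Real

/-!
Forward direction: `L(t, s, x) = -∫ₛᵗ ‖U(τ, s)x‖² dτ` solves the Lyapunov equation, and weak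
instability gives `‖U(τ, t₀)x₀‖ ≤ N e^{-ν(t-τ)} ‖U(t, t₀)x₀‖`, whence `|L| ≤ N²/(2ν) ‖U(t, t₀)x₀‖²`.

Backward direction: `φ = -L(·, t₀, x₀)` is nonnegative with `φ' = ‖U(·, t₀)x₀‖² ≥ φ / m`, so
`e^{-t/m} φ(t)` is nondecreasing. Exponential decay bounds `‖U(·, t₀)x₀‖²` from below on windows
of length one, hence `φ(s + 1) ≥ c ‖U(s, t₀)x₀‖²`, and `m ‖U(t, t₀)x₀‖² ≥ φ(t) ≥ e^{(t-s-1)/m} φ(s + 1)`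
yields weak instability with `ν = 1/(2m)`.
-/

lemma integral_exp_mul_sub_le_s16 {c : ℝ} (hc : 0 < c) (a b : ℝ) :
    ∫ τ in a..b, exp (c * (τ - b)) ≤ 1 / c := by
  have h : ∫ τ in a..b, exp (c * (τ - b)) = (1 - exp (c * (a - b))) / c := by
    simp_rw [mul_sub, sub_eq_add_neg]
    rw [intervalIntegral.integral_comp_mul_add exp hc.ne', integral_exp, smul_eq_mul]
    ring_nf
    simp [field]
  rw [h]
  gcongr
  linarith [exp_pos (c * (a - b))]

lemma integral_norm_sq_le_of_exp_growth {F : Type*} [NormedAddCommGroup F] {f : ℝ → F}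
    {a b N ν : ℝ} (hν : 0 < ν) (hab : a ≤ b)
    (hf : IntervalIntegrable (fun τ => ‖f τ‖ ^ 2) volume a b)
    (hgrowth : ∀ τ ∈ Icc a b, exp (ν * (b - τ)) * ‖f τ‖ ≤ N * ‖f b‖) :
    ∫ τ in a..b, ‖f τ‖ ^ 2 ≤ N ^ 2 / (2 * ν) * ‖f b‖ ^ 2 := by
  have hpoint : ∀ τ ∈ Icc a b, ‖f τ‖ ^ 2 ≤ (N * ‖f b‖) ^ 2 * exp (2 * ν * (τ - b)) := by
    intro τ hτ
    have hsq : exp (ν * (b - τ)) ^ 2 * exp (2 * ν * (τ - b)) = 1 := by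
      rw [← exp_nat_mul, ← exp_add]; ring_nf; exact exp_zero
    calc ‖f τ‖ ^ 2 = (exp (ν * (b - τ)) * ‖f τ‖) ^ 2 * exp (2 * ν * (τ - b)) := by
          rw [mul_pow, mul_right_comm, hsq, one_mul]
      _ ≤ (N * ‖f b‖) ^ 2 * exp (2 * ν * (τ - b)) :=
          mul_le_mul_of_nonneg_right (pow_le_pow_left₀ (by positivity) (hgrowth τ hτ) 2)
            (exp_pos _).le
  calc ∫ τ in a..b, ‖f τ‖ ^ 2
      ≤ ∫ τ in a..b, (N * ‖f b‖) ^ 2 * exp (2 * ν * (τ - b)) :=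
        intervalIntegral.integral_mono_on hab hf
          (Continuous.intervalIntegrable (by fun_prop) _ _) hpoint
    _ ≤ (N * ‖f b‖) ^ 2 * (1 / (2 * ν)) := by
        rw [intervalIntegral.integral_const_mul]
        gcongr
        exact integral_exp_mul_sub_le_s16 (by positivity) a b
    _ = N ^ 2 / (2 * ν) * ‖f b‖ ^ 2 := by ring

lemma exp_div_mul_le_of_le_mul_integral {f φ : ℝ → ℝ} {a m : ℝ} (hm : 0 < m)
    (hf : ContinuousOn f (Ici a)) (hφ : ∀ t, a ≤ t → φ t = φ a + ∫ τ in a..t, f τ)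
    (hle : ∀ t, a ≤ t → φ t ≤ m * f t) {s t : ℝ} (hs : a ≤ s) (hst : s ≤ t) :
    exp ((t - s) / m) * φ s ≤ φ t := by
  -- Freezing `f` before `a` makes its primitive differentiable everywhere.
  set g := fun τ => f (max τ a)
  have hg : Continuous g :=
    hf.comp_continuous (continuous_id.max continuous_const) fun τ => le_max_right τ a
  set ψ := fun τ => φ a + ∫ x in a..τ, g x
  have hψ : ∀ τ, a ≤ τ → ψ τ = φ τ := by
    intro τ hτ
    show φ a + ∫ x in a..τ, g x = φ τ
    rw [hφ τ hτ]
    congr 1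
    refine intervalIntegral.integral_congr fun x hx => ?_
    rw [uIcc_of_le hτ] at hx
    simp only [g, max_eq_left hx.1]
  have hderiv : ∀ τ, HasDerivAt (fun τ => exp (-τ / m) * ψ τ)
      (exp (-τ / m) * (g τ - ψ τ / m)) τ := by
    intro τ
    have h1 : HasDerivAt (fun τ => exp (-τ / m)) (exp (-τ / m) * (-1 / m)) τ :=
      ((hasDerivAt_id τ).neg.div_const m).exp
    have h2 : HasDerivAt ψ (g τ) τ :=
      ((hg.integral_hasStrictDerivAt a τ).hasDerivAt).const_add (φ a)
    exact (h1.mul h2).congr_deriv (by ring)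
  have hmono : MonotoneOn (fun τ => exp (-τ / m) * ψ τ) (Ici a) := by
    refine monotoneOn_of_hasDerivWithinAt_nonneg (convex_Ici a)
      (fun τ _ => (hderiv τ).continuousAt.continuousWithinAt)
      (fun τ _ => (hderiv τ).hasDerivWithinAt) fun τ hτ => ?_
    rw [interior_Ici] at hτ
    have hτ' : a ≤ τ := le_of_lt hτ
    have : ψ τ / m ≤ g τ := by
      rw [hψ τ hτ', div_le_iff₀ hm]
      simpa only [g, max_eq_left hτ', mul_comm] using hle τ hτ'
    exact mul_nonneg (exp_pos _).le (sub_nonneg.2 this)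
  have key := hmono hs (hs.trans hst) hst
  simp only [hψ s hs, hψ t (hs.trans hst)] at key
  calc exp ((t - s) / m) * φ s = exp (t / m) * (exp (-s / m) * φ s) := by
        rw [← mul_assoc, ← exp_add, show t / m + -s / m = (t - s) / m by ring]
    _ ≤ exp (t / m) * (exp (-t / m) * φ t) := by gcongr
    _ = φ t := by rw [← mul_assoc, ← exp_add, show t / m + -t / m = 0 by ring, exp_zero, one_mul]

lemma mul_exp_mul_le_of_lyapunov {f φ : ℝ → ℝ} {a m c : ℝ} (hm : 0 < m) (hc : 0 ≤ c)
    (hf : ContinuousOn f (Ici a))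
    (hφ : ∀ s t, a ≤ s → s ≤ t → φ t = φ s + ∫ τ in s..t, f τ)
    (hφ₀ : ∀ t, a ≤ t → 0 ≤ φ t) (hle : ∀ t, a ≤ t → φ t ≤ m * f t)
    (hwindow : ∀ s t, a ≤ s → s ≤ t → t ≤ s + 1 → c * f s ≤ f t) {s t : ℝ}
    (hs : a ≤ s) (hst : s ≤ t) :
    c * exp ((t - s - 1) / m) * f s ≤ max 1 m * f t := by
  have hf₀ : ∀ t, a ≤ t → 0 ≤ f t := fun t ht =>
    (mul_nonneg_iff_of_pos_left hm).1 ((hφ₀ t ht).trans (hle t ht))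
  have ht : a ≤ t := hs.trans hst
  rcases le_total t (s + 1) with hnear | hfar
  · have hexp : exp ((t - s - 1) / m) ≤ 1 :=
      exp_le_one_iff.2 (div_nonpos_of_nonpos_of_nonneg (by linarith) hm.le)
    calc c * exp ((t - s - 1) / m) * f s ≤ c * 1 * f s := by
          gcongr
          exact hf₀ s hs
      _ ≤ f t := by rw [mul_one]; exact hwindow s t hs hst hnear
      _ ≤ max 1 m * f t := le_mul_of_one_le_left (hf₀ t ht) (le_max_left _ _)
  · have hgain : c * f s ≤ φ (s + 1) :=
      calc c * f s = ∫ _ in s..s + 1, c * f s := by simp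
        _ ≤ ∫ τ in s..s + 1, f τ :=
          intervalIntegral.integral_mono_on (by linarith) intervalIntegrable_const
            ((hf.mono fun τ hτ => hs.trans hτ.1).intervalIntegrable_of_Icc (by linarith))
            fun τ hτ => hwindow s τ hs hτ.1 hτ.2
        _ ≤ φ (s + 1) := by linarith [hφ s (s + 1) hs (by linarith), hφ₀ s hs]
    calc c * exp ((t - s - 1) / m) * f s = exp ((t - (s + 1)) / m) * (c * f s) := by ring_nf
      _ ≤ exp ((t - (s + 1)) / m) * φ (s + 1) := by gcongr
      _ ≤ φ t := exp_div_mul_le_of_le_mul_integral hm hf (fun t ht => hφ a t le_rfl ht) hle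
          (by linarith) hfar
      _ ≤ m * f t := hle t ht
      _ ≤ max 1 m * f t := by gcongr; exacts [hf₀ t ht, le_max_right _ _]

theorem ExpDecay.exists_sq_norm_le {X : Type*} [NormedAddCommGroup X] [NormedSpace ℝ X]
    {E : EvolutionOperator X} (h : ExpDecay E) :
    ∃ c > 0, ∀ (x : X) (t₀ s t : ℝ), 0 ≤ t₀ → t₀ ≤ s → s ≤ t → t ≤ s + 1 →
      c * ‖E.U s t₀ x‖ ^ 2 ≤ ‖E.U t t₀ x‖ ^ 2 := by
  obtain ⟨M, hM, ω, hω, hdec⟩ := h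
  have hM₀ : 0 < M := one_pos.trans_le hM
  refine ⟨(exp (-ω) / M) ^ 2, by positivity, fun x t₀ s t ht₀ hs hst hts => ?_⟩
  have hdec' : exp (-ω * (t - s)) * ‖E.U s t₀ x‖ ≤ M * ‖E.U t t₀ x‖ := by
    simpa only [E.cocycle t s t₀ ht₀ hs hst] using hdec t s (ht₀.trans hs) hst (E.U s t₀ x)
  have hexp : exp (-ω) ≤ exp (-ω * (t - s)) := exp_le_exp.2 (by nlinarith)
  rw [← mul_pow]
  gcongr
  rw [div_mul_eq_mul_div, div_le_iff₀ hM₀, mul_comm _ M]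
  exact (mul_le_mul_of_nonneg_right hexp (norm_nonneg _)).trans hdec'

namespace EvolutionOperator

variable {X : Type*} [NormedAddCommGroup X] [NormedSpace ℝ X] (E : EvolutionOperator X)

theorem continuousOn_norm_sq {t₀ : ℝ} (ht₀ : 0 ≤ t₀) (x : X) :
    ContinuousOn (fun τ => ‖E.U τ t₀ x‖ ^ 2) (Ici t₀) :=
  (((E.cont x).comp (continuous_id.prodMk continuous_const).continuousOn
    fun _ hτ => ⟨ht₀, hτ⟩).norm).pow 2

theorem intervalIntegrable_norm_sq {t₀ a b : ℝ} (ht₀ : 0 ≤ t₀) (x : X) (ha : t₀ ≤ a)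
    (hb : t₀ ≤ b) : IntervalIntegrable (fun τ => ‖E.U τ t₀ x‖ ^ 2) volume a b :=
  ((E.continuousOn_norm_sq ht₀ x).mono fun _ hτ => (le_min ha hb).trans hτ.1).intervalIntegrable

theorem weakExpUnstable_of_sq_norm_le {K ν : ℝ} (hK : 0 ≤ K) (hν : 0 < ν)
    (h : ∀ x₀ : X, ∃ t₀ : ℝ, 0 ≤ t₀ ∧ ∀ s t : ℝ, t₀ ≤ s → s ≤ t →
      exp (ν * (t - s)) * ‖E.U s t₀ x₀‖ ^ 2 ≤ K * ‖E.U t t₀ x₀‖ ^ 2) :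
    WeakExpUnstable E := by
  refine ⟨max 1 √K, le_max_left _ _, ν / 2, half_pos hν, fun x₀ => ?_⟩
  obtain ⟨t₀, ht₀, hx⟩ := h x₀
  refine ⟨t₀, ht₀, fun s t hs hst => ?_⟩
  have hsq : (exp (ν / 2 * (t - s)) * ‖E.U s t₀ x₀‖) ^ 2 ≤ (√K * ‖E.U t t₀ x₀‖) ^ 2 := by
    rw [mul_pow, mul_pow, sq_sqrt hK, ← exp_nat_mul]
    convert hx s t hs hst using 3
    push_cast
    ring
  calc exp (ν / 2 * (t - s)) * ‖E.U s t₀ x₀‖ ≤ √K * ‖E.U t t₀ x₀‖ :=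
        (pow_le_pow_iff_left₀ (by positivity) (by positivity) two_ne_zero).1 hsq
    _ ≤ max 1 √K * ‖E.U t t₀ x₀‖ := by gcongr; exact le_max_right _ _

def HasNonposLyapunovFunction : Prop :=
  ∃ L : ℝ → ℝ → X → ℝ, ∃ m : ℝ, 0 < m ∧
    (∀ t s : ℝ, ∀ x : X, 0 ≤ s → s ≤ t → L t s x ≤ 0) ∧
    ∀ x₀ : X, ∃ t₀ : ℝ, 0 ≤ t₀ ∧
      (∀ s t : ℝ, t₀ ≤ s → s ≤ t →
        L t t₀ x₀ + (∫ τ in s..t, ‖E.U τ t₀ x₀‖ ^ 2) = L s t₀ x₀) ∧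
      (∀ t : ℝ, t₀ ≤ t → |L t t₀ x₀| ≤ m * ‖E.U t t₀ x₀‖ ^ 2)

variable {E}

theorem _root_.WeakExpUnstable.hasNonposLyapunovFunction (h : WeakExpUnstable E) :
    E.HasNonposLyapunovFunction := by
  obtain ⟨N, hN, ν, hν, h⟩ := h
  have hnonneg : ∀ s t, s ≤ t → ∀ x, 0 ≤ ∫ τ in s..t, ‖E.U τ s x‖ ^ 2 :=
    fun s t hst x => intervalIntegral.integral_nonneg hst fun _ _ => by positivity
  refine ⟨fun t s x => -∫ τ in s..t, ‖E.U τ s x‖ ^ 2, N ^ 2 / (2 * ν), by positivity,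
    fun t s x _ hst => neg_nonpos.2 (hnonneg s t hst x), fun x₀ => ?_⟩
  obtain ⟨t₀, ht₀, hx⟩ := h x₀
  refine ⟨t₀, ht₀, fun s t hs hst => ?_, fun t ht => ?_⟩
  · linarith [intervalIntegral.integral_add_adjacent_intervals
      (E.intervalIntegrable_norm_sq ht₀ x₀ le_rfl hs)
      (E.intervalIntegrable_norm_sq ht₀ x₀ hs (hs.trans hst))]
  · rw [abs_neg, abs_of_nonneg (hnonneg t₀ t ht x₀)]
    exact integral_norm_sq_le_of_exp_growth hν ht (E.intervalIntegrable_norm_sq ht₀ x₀ le_rfl ht)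
      fun τ hτ => hx τ t hτ.1 hτ.2

theorem HasNonposLyapunovFunction.weakExpUnstable (hL : E.HasNonposLyapunovFunction)
    (hdecay : ExpDecay E) : WeakExpUnstable E := by
  obtain ⟨L, m, hm, hLnonpos, hL⟩ := hL
  obtain ⟨c, hc, hwindow⟩ := hdecay.exists_sq_norm_le
  refine E.weakExpUnstable_of_sq_norm_le (K := max 1 m * exp (1 / m) / c) (ν := 1 / m)
    (by positivity) (by positivity) fun x₀ => ?_
  obtain ⟨t₀, ht₀, hLeq, hLbound⟩ := hL x₀
  refine ⟨t₀, ht₀, fun s t hs hst => ?_⟩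
  have hgrowth := mul_exp_mul_le_of_lyapunov (φ := fun τ => -L τ t₀ x₀) hm hc.le
    (E.continuousOn_norm_sq ht₀ x₀) (fun s t hs hst => by linarith [hLeq s t hs hst])
    (fun t ht => neg_nonneg.2 (hLnonpos t t₀ x₀ ht₀ ht))
    (fun t ht => (neg_le_abs _).trans (hLbound t ht))
    (fun s t hs hst hts => hwindow x₀ t₀ s t ht₀ hs hst hts) hs hst
  have hsplit : exp (1 / m * (t - s)) = exp (1 / m) * exp ((t - s - 1) / m) := by
    rw [← exp_add]
    ring_nf
  calc exp (1 / m * (t - s)) * ‖E.U s t₀ x₀‖ ^ 2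
      = exp (1 / m) / c * (c * exp ((t - s - 1) / m) * ‖E.U s t₀ x₀‖ ^ 2) := by
        rw [hsplit]
        field_simp
    _ ≤ exp (1 / m) / c * (max 1 m * ‖E.U t t₀ x₀‖ ^ 2) := by gcongr
    _ = max 1 m * exp (1 / m) / c * ‖E.U t t₀ x₀‖ ^ 2 := by ring

end EvolutionOperator

theorem weakExpUnstable_iff_lyapunov_general
    {X : Type*} [NormedAddCommGroup X] [NormedSpace ℝ X]
    (E : EvolutionOperator X) (hdecay : ExpDecay E) :
    WeakExpUnstable E ↔
      ∃ L : ℝ → ℝ → X → ℝ, ∃ m : ℝ, 0 < m ∧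
        (∀ t s : ℝ, ∀ x : X, 0 ≤ s → s ≤ t → L t s x ≤ 0) ∧
        ∀ x₀ : X, ∃ t₀ : ℝ, 0 ≤ t₀ ∧
          (∀ s t : ℝ, t₀ ≤ s → s ≤ t →
            L t t₀ x₀ + (∫ τ in s..t, ‖E.U τ t₀ x₀‖ ^ 2) = L s t₀ x₀) ∧
          (∀ t : ℝ, t₀ ≤ t → |L t t₀ x₀| ≤ m * ‖E.U t t₀ x₀‖ ^ 2) := by
  exact ⟨WeakExpUnstable.hasNonposLyapunovFunction,
    fun h => EvolutionOperator.HasNonposLyapunovFunction.weakExpUnstable h hdecay⟩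

/-- Lyapunov-type characterization: `U` (with exponential decay) is weakly
exponentially unstable iff there exist a nonpositive Lyapunov function `L` for `U`
and `m > 0` such that for each `x₀` there is `t₀ ≥ 0` for which `L` solves the
Lyapunov equation and `|L(t,t₀,x₀)| ≤ m ‖U(t,t₀)x₀‖²` for all `t ≥ t₀`. -/
theorem weakExpUnstable_iff_lyapunov
    {X : Type*} [NormedAddCommGroup X] [NormedSpace ℝ X] [CompleteSpace X]
    (E : EvolutionOperator X) (hdecay : ExpDecay E) :
    WeakExpUnstable E ↔
      ∃ L : ℝ → ℝ → X → ℝ, ∃ m : ℝ, 0 < m ∧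
        (∀ t s : ℝ, ∀ x : X, 0 ≤ s → s ≤ t → L t s x ≤ 0) ∧
        ∀ x₀ : X, ∃ t₀ : ℝ, 0 ≤ t₀ ∧
          (∀ s t : ℝ, t₀ ≤ s → s ≤ t →
            L t t₀ x₀ + (∫ τ in s..t, ‖E.U τ t₀ x₀‖ ^ 2) = L s t₀ x₀) ∧
          (∀ t : ℝ, t₀ ≤ t → |L t t₀ x₀| ≤ m * ‖E.U t t₀ x₀‖ ^ 2) :=
  weakExpUnstable_iff_lyapunov_general E hdecay
end
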